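/- arXiv:1908.05503 — 14 statements merged into one kernel-verified Lean document; each statement's English description precedes it below -/
import Mathlib

section
/- Let C ∈ ℝ^{d×n} have maximal rank d and satisfy 0 ∈ 𝒞° (the open cone generated by its columns). Let D ∈ ℝ^{n×(k+1)} (k+1 = n−d) be a Gale dual matrix of C with rows P_1,...,P_n, let 𝒞_P = ℝ_{>0}P_1 + ... + ℝ_{>0}P_n and 𝒞_P^ν = {y ∈ ℝ^{k+1} : ⟨P_i, y⟩ > 0 for all i}. Then for any nonzero u in the closed cone ℝ_{≥0}P_1 + ... + ℝ_{≥0}P_n and any c > 0, the polytope 𝒞_P^ν ∩ {y : ⟨u, y⟩ = c} has dimension k; moreover this polytope is bounded if and only if u ∈ 𝒞_P. -/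
open Matrix Module Bornology

private lemma aux_inj {m n : ℕ} (A : Matrix (Fin m) (Fin n) ℝ) (h : A.rank = n) :
    Function.Injective A.mulVecLin := by
  rw [← LinearMap.ker_eq_bot, ← Submodule.finrank_eq_zero]
  have h1 := LinearMap.finrank_range_add_finrank_ker A.mulVecLin
  rw [Module.finrank_fin_fun] at h1
  have h2 : Module.finrank ℝ (LinearMap.range A.mulVecLin) = n := h
  omega

private lemma aux_surj {m n : ℕ} (A : Matrix (Fin m) (Fin n) ℝ) (h : A.rank = m) :
    Function.Surjective A.mulVecLin := by
  rw [← LinearMap.range_eq_top]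
  apply Submodule.eq_top_of_finrank_eq
  rw [Module.finrank_fin_fun]
  exact h

private lemma aux_trans {m n : ℕ} (A : Matrix (Fin m) (Fin n) ℝ) (s : Fin m → ℝ) :
    Aᵀ.mulVec s = ∑ i, s i • A i := by
  ext j
  simp [Matrix.mulVec, dotProduct, Finset.sum_apply, Matrix.transpose_apply, mul_comm]

private lemma aux_dot {m n : ℕ} (A : Matrix (Fin m) (Fin n) ℝ) (s : Fin m → ℝ) (y : Fin n → ℝ) :
    ∑ j, (∑ i, s i • A i) j * y j = ∑ i, s i * A.mulVec y i := by
  simp only [Finset.sum_apply, Pi.smul_apply, smul_eq_mul, Finset.sum_mul, Matrix.mulVec,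
    dotProduct, Finset.mul_sum]
  rw [Finset.sum_comm]
  exact Finset.sum_congr rfl fun i _ => Finset.sum_congr rfl fun j _ => by ring

private lemma aux_split {n : ℕ} (u x v : Fin n → ℝ) (a : ℝ) :
    ∑ j, u j * (x + a • v) j = (∑ j, u j * x j) + a * ∑ j, u j * v j := by
  simp [mul_add, Finset.sum_add_distrib, Finset.mul_sum, mul_left_comm]

private lemma aux_ker {d k : ℕ} (C : Matrix (Fin d) (Fin (d+k+1)) ℝ) (hrank : C.rank = d)
    (D : Matrix (Fin (d+k+1)) (Fin (k+1)) ℝ) (hCD : C * D = 0) (hDrank : D.rank = k+1)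
    (t : Fin (d+k+1) → ℝ) (ht : C.mulVec t = 0) : ∃ y, D.mulVec y = t := by
  have hle : LinearMap.range D.mulVecLin ≤ LinearMap.ker C.mulVecLin := by
    rintro x ⟨y, rfl⟩
    simp [LinearMap.mem_ker, Matrix.mulVecLin_apply, Matrix.mulVec_mulVec, hCD]
  have hker : finrank ℝ (LinearMap.ker C.mulVecLin) = k + 1 := by
    have h1 := LinearMap.finrank_range_add_finrank_ker C.mulVecLin
    rw [Module.finrank_fin_fun] at h1
    have h2 : finrank ℝ (LinearMap.range C.mulVecLin) = d := hrank
    omega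
  have hD : finrank ℝ (LinearMap.range D.mulVecLin) = k + 1 := hDrank
  have heq := Submodule.eq_of_le_of_finrank_le hle (by rw [hker, hD])
  have : t ∈ LinearMap.range D.mulVecLin := by rw [heq]; exact ht
  exact this

private noncomputable def auxφ {n : ℕ} (u : Fin n → ℝ) : (Fin n → ℝ) →ₗ[ℝ] ℝ where
  toFun := fun y => ∑ j, u j * y j
  map_add' := fun x y => by simp [mul_add, Finset.sum_add_distrib]
  map_smul' := fun r x => by
    simp only [Pi.smul_apply, smul_eq_mul, RingHom.id_apply, Finset.mul_sum]
    exact Finset.sum_congr rfl fun j _ => by ring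

@[simp] private lemma auxφ_apply {n : ℕ} (u y : Fin n → ℝ) : auxφ u y = ∑ j, u j * y j := rfl

private lemma auxφ_ker {k : ℕ} (u : Fin (k+1) → ℝ) (hu : u ≠ 0) :
    finrank ℝ (LinearMap.ker (auxφ u)) = k := by
  have hsurj : Function.Surjective (auxφ u) := by
    obtain ⟨j, hj⟩ := Function.ne_iff.mp hu
    simp only [Pi.zero_apply] at hj
    intro x
    refine ⟨fun j' => if j' = j then x / u j else 0, ?_⟩
    rw [auxφ_apply, Finset.sum_eq_single j]
    · rw [if_pos rfl, mul_comm, div_mul_cancel₀ _ hj]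
    · intro b _ hb
      rw [if_neg hb, mul_zero]
    · simp
  have h1 := LinearMap.finrank_range_add_finrank_ker (auxφ u)
  rw [Module.finrank_fin_fun, LinearMap.range_eq_top.mpr hsurj, finrank_top] at h1
  simp only [Module.finrank_self] at h1
  omega

set_option maxHeartbeats 1000000 in
/-- Lemma "can be made bounded": for any nonzero `u` in the closed cone
generated by the rows of a Gale dual `D` of `C` and any `c > 0`, the polytope
`𝒞_P^ν ∩ {⟨u,y⟩ = c}` has dimension `k`, and it is bounded iff `u` lies in the
open cone generated by the rows of `D`. -/
theorem polytope_dim_and_bounded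
    (d k : ℕ) (C : Matrix (Fin d) (Fin (d + k + 1)) ℝ)
    (hrank : C.rank = d)
    (hcone : ∃ t : Fin (d + k + 1) → ℝ, (∀ j, 0 < t j) ∧ ∀ i, ∑ j, t j * C i j = 0)
    (D : Matrix (Fin (d + k + 1)) (Fin (k + 1)) ℝ)
    (hCD : C * D = 0) (hDrank : D.rank = k + 1)
    (u : Fin (k + 1) → ℝ) (hu : u ≠ 0)
    (huclosed : ∃ t : Fin (d + k + 1) → ℝ, (∀ i, 0 ≤ t i) ∧ u = ∑ i, t i • D i)
    (c : ℝ) (hc : 0 < c) :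
    Module.finrank ℝ (affineSpan ℝ {y : Fin (k + 1) → ℝ |
        (∀ i, 0 < D.mulVec y i) ∧ ∑ j, u j * y j = c}).direction = k ∧
    (Bornology.IsBounded {y : Fin (k + 1) → ℝ |
        (∀ i, 0 < D.mulVec y i) ∧ ∑ j, u j * y j = c} ↔
      ∃ t : Fin (d + k + 1) → ℝ, (∀ i, 0 < t i) ∧ u = ∑ i, t i • D i) := by
  obtain ⟨t, htpos, htC⟩ := hcone
  have htC' : C.mulVec t = 0 := by
    ext i
    simpa [Matrix.mulVec, dotProduct, mul_comm] using htC i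
  obtain ⟨y₀, hy₀⟩ := aux_ker C hrank D hCD hDrank t htC'
  set S : Set (Fin (k+1) → ℝ) :=
    {y | (∀ i, 0 < D.mulVec y i) ∧ ∑ j, u j * y j = c} with hSdef
  obtain ⟨s₀, hs₀, hus₀⟩ := huclosed
  have hdot : ∀ y, ∑ j, u j * y j = ∑ i, s₀ i * D.mulVec y i := by
    intro y; rw [hus₀]; exact aux_dot D s₀ y
  have hexists_pos : ∃ i, 0 < s₀ i := by
    by_contra h
    push_neg at h
    apply hu
    have hz : ∀ i, s₀ i = 0 := fun i => le_antisymm (h i) (hs₀ i)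
    rw [hus₀]
    simp [hz]
  have huy₀ : 0 < ∑ j, u j * y₀ j := by
    rw [hdot]
    obtain ⟨i₀, hi₀⟩ := hexists_pos
    apply Finset.sum_pos'
    · intro i _
      exact mul_nonneg (hs₀ i) (by rw [hy₀]; exact (htpos i).le)
    · exact ⟨i₀, Finset.mem_univ _, mul_pos hi₀ (by rw [hy₀]; exact htpos i₀)⟩
  set q : Fin (k+1) → ℝ := (c / (∑ j, u j * y₀ j)) • y₀ with hqdef
  have hα : 0 < c / (∑ j, u j * y₀ j) := div_pos hc huy₀
  have hq : q ∈ S := by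
    constructor
    · intro i
      rw [hqdef, Matrix.mulVec_smul]
      exact smul_pos hα (by rw [hy₀]; exact htpos i)
    · rw [hqdef]
      have h2 : ∑ j, u j * ((c / (∑ j, u j * y₀ j)) • y₀) j
          = (c / (∑ j, u j * y₀ j)) * ∑ j, u j * y₀ j := by
        simp [Finset.mul_sum, mul_left_comm]
      rw [h2, div_mul_cancel₀ _ (ne_of_gt huy₀)]
  -- dimension part
  have hdim : (affineSpan ℝ S).direction = LinearMap.ker (auxφ u) := by
    rw [direction_affineSpan]
    apply le_antisymm
    · rw [vectorSpan_def, Submodule.span_le]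
      rintro x hx
      rw [Set.mem_vsub] at hx
      obtain ⟨y1, hy1, y2, hy2, rfl⟩ := hx
      rw [SetLike.mem_coe, LinearMap.mem_ker]
      have h1 : auxφ u y1 = c := hy1.2
      have h2 : auxφ u y2 = c := hy2.2
      show auxφ u (y1 - y2) = 0
      rw [map_sub, h1, h2, sub_self]
    · intro v hv
      rw [LinearMap.mem_ker, auxφ_apply] at hv
      have huniv : (Finset.univ : Finset (Fin (d+k+1))).Nonempty := Finset.univ_nonempty
      obtain ⟨i₁, -, hmin⟩ := Finset.exists_min_image Finset.univ (fun i => D.mulVec q i) huniv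
      set m := D.mulVec q i₁ with hmdef
      have hm : 0 < m := hq.1 i₁
      set N := ‖D.mulVec v‖ with hNdef
      have hN : 0 ≤ N := norm_nonneg _
      set ε := m / (N + 1) with hεdef
      have hεpos : 0 < ε := div_pos hm (by linarith)
      have hεN : ε * (N + 1) = m := div_mul_cancel₀ _ (by linarith)
      have hεmem : q + ε • v ∈ S := by
        constructor
        · intro i
          have hDvi : |D.mulVec v i| ≤ N := by
            rw [hNdef, ← Real.norm_eq_abs]
            exact norm_le_pi_norm _ i
          have hDvi' : -N ≤ D.mulVec v i := (abs_le.mp hDvi).1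
          have hqi : m ≤ D.mulVec q i := hmin i (Finset.mem_univ i)
          have hexp : D.mulVec (q + ε • v) i = D.mulVec q i + ε * D.mulVec v i := by
            have hsm := congrFun (Matrix.mulVec_smul D ε v) i
            rw [Matrix.mulVec_add, Pi.add_apply, hsm, Pi.smul_apply, smul_eq_mul]
          rw [hexp]
          nlinarith [mul_le_mul_of_nonneg_left hDvi' hεpos.le]
        · rw [aux_split, hq.2, hv, mul_zero, add_zero]
      have hmem : ε • v ∈ vectorSpan ℝ S := by
        have h3 := vsub_mem_vectorSpan ℝ hεmem hq
        have h4 : (q + ε • v) -ᵥ q = ε • v := by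
          rw [vsub_eq_sub]; abel
        rwa [h4] at h3
      have h5 := Submodule.smul_mem (vectorSpan ℝ S) ε⁻¹ hmem
      rwa [smul_smul, inv_mul_cancel₀ (ne_of_gt hεpos), one_smul] at h5
  constructor
  · rw [hdim, auxφ_ker u hu]
  constructor
  · -- hard direction: bounded → strictly positive combination
    intro hb
    by_contra hstrict
    classical
    set K : Set (Fin (k+1) → ℝ) :=
      {w | ∃ s : Fin (d+k+1) → ℝ, (∀ i, 0 ≤ s i) ∧ w = ∑ i, s i • D i} with hKdef
    have hKadd : ∀ x ∈ K, ∀ y ∈ K, x + y ∈ K := by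
      rintro x ⟨a, ha, rfl⟩ y ⟨b, hb', rfl⟩
      exact ⟨a + b, fun i => add_nonneg (ha i) (hb' i), by
        rw [← Finset.sum_add_distrib]
        exact Finset.sum_congr rfl fun i _ => by simp [add_smul]⟩
    have hKsmul : ∀ (a : ℝ), 0 ≤ a → ∀ x ∈ K, a • x ∈ K := by
      rintro a ha x ⟨s, hs, rfl⟩
      exact ⟨fun i => a * s i, fun i => mul_nonneg ha (hs i), by
        rw [Finset.smul_sum]
        exact Finset.sum_congr rfl fun i _ => by rw [smul_smul]⟩
    have hKconv : Convex ℝ K := fun x hx y hy a b ha hb' _ =>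
      hKadd _ (hKsmul a ha x hx) _ (hKsmul b hb' y hy)
    have huK : u ∈ K := ⟨s₀, hs₀, hus₀⟩
    have h0K : (0 : Fin (k+1) → ℝ) ∈ K := ⟨0, fun i => le_refl 0, by simp⟩
    have hTsurj : Function.Surjective Dᵀ.mulVecLin := by
      apply aux_surj
      rw [Matrix.rank_transpose]; exact hDrank
    obtain ⟨g, hg⟩ := Dᵀ.mulVecLin.exists_rightInverse_of_surjective
      (LinearMap.range_eq_top.mpr hTsurj)
    set G := LinearMap.toContinuousLinearMap g with hGdef
    set p : Fin (k+1) → ℝ := ∑ i, D i with hpdef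
    have hpK : p ∈ K := ⟨fun _ => 1, fun _ => zero_le_one, by simp; exact hpdef⟩
    set r : ℝ := (‖G‖ + 1)⁻¹ with hrdef
    have hrpos : 0 < r := by positivity
    have hball : Metric.ball p r ⊆ K := by
      intro w hw
      rw [Metric.mem_ball, dist_eq_norm] at hw
      set z := w - p with hzdef
      have hz : Dᵀ.mulVec (g z) = z := by
        have h5 := LinearMap.congr_fun hg z
        simp only [LinearMap.coe_comp, Function.comp_apply, Matrix.mulVecLin_apply,
          LinearMap.id_coe, id_eq] at h5
        exact h5
      have hgz : ∀ i, |g z i| < 1 := by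
        intro i
        have h1 : ‖g z‖ ≤ ‖G‖ * ‖z‖ := by
          have := G.le_opNorm z
          rwa [hGdef, LinearMap.coe_toContinuousLinearMap'] at this
        have h2 : |g z i| ≤ ‖g z‖ := by
          rw [← Real.norm_eq_abs]; exact norm_le_pi_norm _ i
        have h3 : ‖G‖ * ‖z‖ < ‖G‖ * r + r := by
          nlinarith [norm_nonneg G, norm_nonneg z, hw]
        have h4 : ‖G‖ * r + r = 1 := by
          rw [hrdef]
          field_simp
        linarith
      have hsum : w = ∑ i, (1 + g z i) • D i := by
        have hweq : w = p + Dᵀ.mulVec (g z) := by rw [hz, hzdef]; abel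
        rw [hweq, aux_trans, hpdef]
        erw [← Finset.sum_add_distrib]
        exact Finset.sum_congr rfl fun i _ => by rw [add_smul, one_smul]
      exact ⟨fun i => 1 + g z i, fun i => by
        have := (abs_le.mp (hgz i).le).1
        show (0:ℝ) ≤ 1 + g z i
        linarith, hsum⟩
    have hpint : p ∈ interior K := mem_interior.mpr ⟨Metric.ball p r, hball,
      Metric.isOpen_ball, Metric.mem_ball_self hrpos⟩
    have hmemint : ∀ x ∈ K, ∀ ε : ℝ, 0 < ε → x + ε • p ∈ interior K := by
      intro x hx ε hε
      rw [mem_interior]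
      refine ⟨Metric.ball (x + ε • p) (ε * r), ?_, Metric.isOpen_ball,
        Metric.mem_ball_self (by positivity)⟩
      intro w hw
      rw [Metric.mem_ball, dist_eq_norm] at hw
      have hmem : p + ε⁻¹ • (w - (x + ε • p)) ∈ K := by
        apply hball
        rw [Metric.mem_ball, dist_eq_norm]
        have h6 : ‖p + ε⁻¹ • (w - (x + ε • p)) - p‖ = ε⁻¹ * ‖w - (x + ε • p)‖ := by
          rw [add_sub_cancel_left, norm_smul, Real.norm_eq_abs, abs_of_pos (by positivity)]
        rw [h6, inv_mul_lt_iff₀ hε]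
        linarith [hw]
      have hweq : w = x + ε • (p + ε⁻¹ • (w - (x + ε • p))) := by
        rw [smul_add, smul_smul, mul_inv_cancel₀ (ne_of_gt hε), one_smul]
        abel
      rw [hweq]
      exact hKadd x hx _ (hKsmul ε hε.le _ hmem)
    have hu_notin : u ∉ interior K := by
      intro h
      obtain ⟨ρ, hρpos, hρball⟩ := Metric.isOpen_iff.mp isOpen_interior u h
      set ε := ρ / (2 * (‖p‖ + 1)) with hεdef
      have hεpos : 0 < ε := by positivity
      have hmem : u - ε • p ∈ K := by
        apply interior_subset
        apply hρball
        rw [Metric.mem_ball, dist_eq_norm, sub_sub_cancel_left, norm_neg, norm_smul,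
          Real.norm_eq_abs, abs_of_pos hεpos, hεdef, div_mul_eq_mul_div,
          div_lt_iff₀ (by positivity)]
        nlinarith [norm_nonneg p, hρpos]
      obtain ⟨s, hs, hsum⟩ := hmem
      apply hstrict
      refine ⟨fun i => s i + ε, fun i => by show (0:ℝ) < s i + ε; linarith [hs i], ?_⟩
      have h1 : u = (u - ε • p) + ε • p := by abel
      rw [h1, hsum, hpdef]
      erw [Finset.smul_sum, ← Finset.sum_add_distrib]
      exact Finset.sum_congr rfl fun i _ => by rw [add_smul]
    obtain ⟨f, hf⟩ := geometric_hahn_banach_open_point (hKconv.interior)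
      isOpen_interior hu_notin
    have hfK : ∀ x ∈ K, f x ≤ f u := by
      intro x hx
      by_contra h
      push_neg at h
      set ε := (f x - f u) / (|f p| + 1) with hεdef
      have hεpos : 0 < ε := div_pos (by linarith) (by positivity)
      have hkey := hf _ (hmemint x hx ε hεpos)
      rw [map_add, _root_.map_smul, smul_eq_mul] at hkey
      have hεf : ε * (|f p| + 1) = f x - f u := div_mul_cancel₀ _ (by positivity)
      nlinarith [neg_abs_le (f p), le_abs_self (f p), hεpos]
    have hfu0 : 0 ≤ f u := by
      have h7 := hfK 0 h0K
      simpa using h7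
    have hfle0 : ∀ x ∈ K, f x ≤ 0 := by
      intro x hx
      by_contra h
      push_neg at h
      have hmem := hKsmul ((f u + 1) / f x) (div_nonneg (by linarith) h.le) x hx
      have h8 := hfK _ hmem
      rw [_root_.map_smul, smul_eq_mul, div_mul_cancel₀ _ (ne_of_gt h)] at h8
      linarith
    have hfu : f u = 0 := le_antisymm (hfle0 u huK) hfu0
    have hfp : f p < 0 := by
      have h9 := hf p hpint
      rwa [hfu] at h9
    set v : Fin (k+1) → ℝ := fun j => - f (fun j' => if j = j' then 1 else 0) with hvdef
    have hfv : ∀ y, f y = - ∑ j, y j * v j := by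
      intro y
      have h10 := LinearMap.pi_apply_eq_sum_univ (f : (Fin (k+1) → ℝ) →ₗ[ℝ] ℝ) y
      simp only [ContinuousLinearMap.coe_coe] at h10
      rw [h10, ← Finset.sum_neg_distrib]
      refine Finset.sum_congr rfl fun j _ => ?_
      rw [hvdef]
      simp only [smul_eq_mul, mul_neg, neg_neg]
    have hvne : v ≠ 0 := by
      intro h
      rw [hfv p, h] at hfp
      simp at hfp
    have hvD : ∀ i, 0 ≤ D.mulVec v i := by
      intro i
      have hDiK : D i ∈ K := by
        refine ⟨fun i' => if i' = i then 1 else 0,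
          fun i' => by show (0:ℝ) ≤ if i' = i then 1 else 0; split <;> norm_num, ?_⟩
        symm
        rw [Finset.sum_eq_single i]
        · simp
        · intro b _ hb'
          simp [hb']
        · simp
      have h1 : f (D i) ≤ 0 := hfle0 _ hDiK
      rw [hfv] at h1
      have h11 : D.mulVec v i = ∑ j, D i j * v j := rfl
      rw [h11]
      linarith
    have hvu : ∑ j, u j * v j = 0 := by
      have h12 := hfu
      rw [hfv] at h12
      linarith
    obtain ⟨M, hM⟩ := isBounded_iff_forall_norm_le.mp hb
    have hvnorm : 0 < ‖v‖ := norm_pos_iff.mpr hvne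
    set a := (M + ‖q‖ + 1) / ‖v‖ with hadef
    have hqM : ‖q‖ ≤ M := hM q hq
    have hapos : 0 < a := div_pos (by linarith [norm_nonneg q]) hvnorm
    have hmem : q + a • v ∈ S := by
      constructor
      · intro i
        have hsm := congrFun (Matrix.mulVec_smul D a v) i
        rw [Matrix.mulVec_add, Pi.add_apply, hsm, Pi.smul_apply, smul_eq_mul]
        have h13 := hq.1 i
        nlinarith [hvD i]
      · rw [aux_split, hq.2, hvu, mul_zero, add_zero]
    have h1 := hM _ hmem
    have h2 : ‖a • v‖ ≤ ‖q + a • v‖ + ‖q‖ := by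
      have h3 := norm_add_le (q + a • v) (-q)
      simpa using h3
    rw [norm_smul, Real.norm_eq_abs, abs_of_pos hapos, hadef,
      div_mul_cancel₀ _ (ne_of_gt hvnorm)] at h2
    linarith
  · -- easy direction
    rintro ⟨t', ht'pos, hut'⟩
    have hDinj := aux_inj D hDrank
    obtain ⟨g, hg⟩ := (D.mulVecLin).exists_leftInverse_of_injective
      (LinearMap.ker_eq_bot.mpr hDinj)
    set G := LinearMap.toContinuousLinearMap g with hGdef
    rw [isBounded_iff_forall_norm_le]
    refine ⟨‖G‖ * (c * ∑ i, (t' i)⁻¹), ?_⟩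
    intro y hy
    have hsuminv : ∀ i, (t' i)⁻¹ ≤ ∑ i', (t' i')⁻¹ := by
      intro i
      exact Finset.single_le_sum (f := fun i' => (t' i')⁻¹)
        (fun i' _ => (inv_pos.mpr (ht'pos i')).le) (Finset.mem_univ i)
    have hDyb : ‖D.mulVec y‖ ≤ c * ∑ i, (t' i)⁻¹ := by
      have hqq : 0 ≤ c * ∑ i, (t' i)⁻¹ := by
        apply mul_nonneg hc.le
        exact Finset.sum_nonneg fun i _ => (inv_pos.mpr (ht'pos i)).le
      rw [pi_norm_le_iff_of_nonneg hqq]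
      intro i
      rw [Real.norm_eq_abs, abs_of_pos (hy.1 i)]
      have hdot' : ∑ i', t' i' * D.mulVec y i' = c := by
        rw [← hy.2, hut']
        exact (aux_dot D t' y).symm
      have h1 : t' i * D.mulVec y i ≤ c := by
        rw [← hdot']
        exact Finset.single_le_sum (f := fun i' => t' i' * D.mulVec y i')
          (fun i' _ => (mul_pos (ht'pos i') (hy.1 i')).le) (Finset.mem_univ i)
      have h2 : D.mulVec y i ≤ c * (t' i)⁻¹ := by
        rw [mul_comm, ← div_eq_inv_mul, le_div_iff₀ (ht'pos i)]
        linarith [h1]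
      calc D.mulVec y i ≤ c * (t' i)⁻¹ := h2
        _ ≤ c * ∑ i', (t' i')⁻¹ := by
            apply mul_le_mul_of_nonneg_left (hsuminv i) hc.le
    have hyG : y = G (D.mulVec y) := by
      have := LinearMap.congr_fun hg y
      simp only [LinearMap.coe_comp, Function.comp_apply, Matrix.mulVecLin_apply,
        LinearMap.id_coe, id_eq] at this
      rw [hGdef]
      exact (by simpa using this.symm)
    calc ‖y‖ = ‖G (D.mulVec y)‖ := by rw [← hyG]
      _ ≤ ‖G‖ * ‖D.mulVec y‖ := G.le_opNorm _
      _ ≤ ‖G‖ * (c * ∑ i, (t' i)⁻¹) :=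
          mul_le_mul_of_nonneg_left hDyb (norm_nonneg G)
end

section
/- Let C ∈ ℝ^{d×n} have maximal rank d. Then there exists a Gale dual matrix D of C, with rows P_1,...,P_n ∈ ℝ^{k+1} (k+1 = n−d), such that the standard basis vector (1,0,...,0) lies in the open cone 𝒞_P = ℝ_{>0}P_1 + ... + ℝ_{>0}P_n. -/
open Matrix

/-- any full-rank `C` admits a Gale dual matrix `D` such that
`(1,0,…,0)` lies in the open cone generated by the rows of `D`. -/
theorem exists_gale_dual_with_e0_in_open_cone
    (d k : ℕ) (C : Matrix (Fin d) (Fin (d + k + 1)) ℝ)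
    (hrank : C.rank = d) :
    ∃ D : Matrix (Fin (d + k + 1)) (Fin (k + 1)) ℝ,
      C * D = 0 ∧ D.rank = k + 1 ∧
      ∃ t : Fin (d + k + 1) → ℝ, (∀ i, 0 < t i) ∧
        (Pi.single (0 : Fin (k + 1)) (1 : ℝ)) = ∑ i, t i • D i := by
  classical
  -- kernel of C has dimension k+1
  have hrn := LinearMap.finrank_range_add_finrank_ker C.mulVecLin
  rw [Module.finrank_pi] at hrn
  have hker : Module.finrank ℝ (LinearMap.ker C.mulVecLin) = k + 1 := by
    have : Module.finrank ℝ (LinearMap.range C.mulVecLin) = d := hrank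
    simp [Fintype.card_fin] at hrn
    omega
  set K := LinearMap.ker C.mulVecLin with hK
  let b : Module.Basis (Fin (k + 1)) ℝ K := Module.finBasisOfFinrankEq ℝ K hker
  let D0 : Matrix (Fin (d + k + 1)) (Fin (k + 1)) ℝ :=
    Matrix.of fun i j => (b j : Fin (d + k + 1) → ℝ) i
  have hCD0 : C * D0 = 0 := by
    ext r j
    have hmem : C.mulVecLin (b j : Fin (d + k + 1) → ℝ) = 0 := (b j).2
    have h0 := congrFun hmem r
    rw [Matrix.mulVecLin_apply] at h0
    simp only [Matrix.mul_apply, Matrix.zero_apply, D0, Matrix.of_apply]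
    simpa [Matrix.mulVec, dotProduct] using h0
  -- D0 has rank k+1
  have hinj : Function.Injective D0.mulVecLin := by
    rw [← LinearMap.ker_eq_bot, LinearMap.ker_eq_bot']
    intro x hx
    have hxsum : ∑ j, x j • (b j : Fin (d + k + 1) → ℝ) = 0 := by
      funext i
      have := congrFun hx i
      simpa [Matrix.mulVecLin_apply, Matrix.mulVec, dotProduct, D0,
        Finset.sum_apply, mul_comm] using this
    have hxsum' : ∑ j, x j • b j = 0 := by
      apply Subtype.ext
      push_cast
      simpa using hxsum
    have hli := b.linearIndependent
    rw [Fintype.linearIndependent_iff] at hli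
    funext j
    exact hli x hxsum' j
  have hrankD0 : D0.rank = k + 1 := by
    rw [Matrix.rank]
    rw [LinearMap.finrank_range_of_inj hinj]
    simp
  -- find positive t with v := ∑ t i • D0 i ≠ 0
  obtain ⟨t, ht, hv⟩ : ∃ t : Fin (d + k + 1) → ℝ, (∀ i, 0 < t i) ∧
      (∑ i, t i • D0 i) ≠ 0 := by
    by_cases hs : (∑ i, (1 : ℝ) • D0 i) ≠ 0
    · exact ⟨fun _ => 1, fun _ => one_pos, hs⟩
    · push_neg at hs
      have hD0 : D0 ≠ 0 := by
        intro h
        rw [h, Matrix.rank_zero] at hrankD0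
        omega
      obtain ⟨i0, hi0⟩ : ∃ i0, D0 i0 ≠ 0 := by
        by_contra h
        push_neg at h
        exact hD0 (by ext i j; have := congrFun (h i) j; simpa using this)
      refine ⟨fun i => if i = i0 then 2 else 1, fun i => by positivity, ?_⟩
      have h2 : ∀ i, (if i = i0 then (2:ℝ) else 1) • D0 i
          = (1:ℝ) • D0 i + (if i = i0 then D0 i else 0) := by
        intro i
        by_cases h : i = i0 <;> simp [h] <;> module
      have : (∑ i, (if i = i0 then (2:ℝ) else 1) • D0 i)
          = (∑ i, (1:ℝ) • D0 i) + ∑ i, (if i = i0 then D0 i else 0) := by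
        rw [← Finset.sum_add_distrib]
        exact Finset.sum_congr rfl fun i _ => h2 i
      rw [this, hs, zero_add, Finset.sum_ite_eq' Finset.univ i0 (fun i => D0 i)]
      simpa using hi0
  set v : Fin (k + 1) → ℝ := ∑ i, t i • D0 i with hvdef
  -- functional g with g v = 1
  obtain ⟨j0, hj0⟩ : ∃ j0, v j0 ≠ 0 := by
    by_contra h
    push_neg at h
    exact hv (funext h)
  let g : (Fin (k + 1) → ℝ) →ₗ[ℝ] ℝ := (v j0)⁻¹ • LinearMap.proj j0
  have hgv : g v = 1 := by
    simp [g, inv_mul_cancel₀ hj0]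
  -- basis of ℝ^{k+1} starting with v
  have hkerg : Module.finrank ℝ (LinearMap.ker g) = k := by
    have h1 := LinearMap.finrank_range_add_finrank_ker g
    have hgsurj : LinearMap.range g = ⊤ := by
      rw [LinearMap.range_eq_top]
      intro r
      exact ⟨r • v, by simp [_root_.map_smul, hgv]⟩
    rw [hgsurj] at h1
    simp [Module.finrank_pi] at h1
    omega
  let bN : Module.Basis (Fin k) ℝ (LinearMap.ker g) := Module.finBasisOfFinrankEq ℝ _ hkerg
  have hli : ∀ (c : ℝ), ∀ x ∈ LinearMap.ker g, c • v + x = 0 → c = 0 := by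
    intro c x hx h
    have := congrArg g h
    rw [map_add, _root_.map_smul, hgv, LinearMap.mem_ker.mp hx, map_zero] at this
    simpa using this
  have hsp : ∀ z : Fin (k + 1) → ℝ, ∃ c : ℝ, z + c • v ∈ LinearMap.ker g := by
    intro z
    exact ⟨-g z, by simp [LinearMap.mem_ker, map_add, _root_.map_smul, hgv]⟩
  let c : Module.Basis (Fin (k + 1)) ℝ (Fin (k + 1) → ℝ) := Module.Basis.mkFinCons v bN hli hsp
  have hc0 : c 0 = v := by
    have := Module.Basis.coe_mkFinCons v bN hli hsp
    rw [show c = Module.Basis.mkFinCons v bN hli hsp from rfl, this]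
    simp
  let f := c.equiv (Pi.basisFun ℝ (Fin (k + 1))) (Equiv.refl _)
  have hfv : f v = Pi.single (0 : Fin (k + 1)) (1 : ℝ) := by
    rw [← hc0, Module.Basis.equiv_apply]
    simp [Pi.basisFun_apply]
  let M : Matrix (Fin (k + 1)) (Fin (k + 1)) ℝ := (LinearMap.toMatrix' (f : _ →ₗ[ℝ] _))ᵀ
  have hMdet : IsUnit M.det := by
    rw [Matrix.det_transpose, LinearMap.det_toMatrix']
    exact f.isUnit_det'
  refine ⟨D0 * M, ?_, ?_, t, ht, ?_⟩
  · rw [← Matrix.mul_assoc, hCD0, Matrix.zero_mul]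
  · rw [Matrix.rank_mul_eq_left_of_isUnit_det M D0 hMdet, hrankD0]
  · have hfv' : (LinearMap.toMatrix' (f : _ →ₗ[ℝ] _)) *ᵥ v
        = Pi.single (0 : Fin (k + 1)) (1 : ℝ) := by
      rw [← Matrix.toLin'_apply, Matrix.toLin'_toMatrix']
      exact hfv
    funext j
    have h1 : (∑ i, t i • (D0 * M) i) j = ∑ l, v l * M l j := by
      rw [Finset.sum_apply]
      simp only [Pi.smul_apply, smul_eq_mul, Matrix.mul_apply]
      rw [show ∑ l, v l * M l j = ∑ l, ∑ i, t i * D0 i l * M l j by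
        apply Finset.sum_congr rfl; intro l _
        rw [hvdef, Finset.sum_apply, Finset.sum_mul]
        simp]
      rw [Finset.sum_comm]
      refine Finset.sum_congr rfl fun i _ => ?_
      rw [Finset.mul_sum]
      refine Finset.sum_congr rfl fun l _ => ?_
      ring
    rw [h1, ← hfv']
    simp [Matrix.mulVec, dotProduct, M, Matrix.transpose_apply, mul_comm]
end

section
/- Let 𝒜 = {a_1,...,a_n} ⊂ ℝ^d, A ∈ ℝ^{(d+1)×n} the matrix with columns (1,a_j), and C ∈ ℝ^{d×n} of maximal rank d, with Gale dual matrices B = (b_{ij}) ∈ ℝ^{n×k} of A and D ∈ ℝ^{n×(k+1)} of C with rows P_1,...,P_n. Then the map x ↦ y, where y ∈ ℝ^{k+1} is the unique vector with x^{a_i} = ⟨P_i, y⟩ for all i, gives a bijection between the positive solutions x ∈ ℝ_{>0}^d of the system Σ_j c_{ij}x^{a_j} = 0 (i = 1,...,d) and the solutions y in the open cone 𝒞_P^ν = {y : ⟨P_i,y⟩ > 0 ∀i} of the Gale dual system ∏_{i=1}^n ⟨P_i, y⟩^{b_{ij}} = 1 (j = 1,...,k), considered up to positive scaling. -/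
open Matrix Module

lemma aux_ker_eq_range {p q r : ℕ} (M : Matrix (Fin p) (Fin q) ℝ) (N : Matrix (Fin q) (Fin r) ℝ)
    (hMN : M * N = 0) (hdim : M.rank + N.rank = q) :
    LinearMap.ker M.mulVecLin = LinearMap.range N.mulVecLin := by
  have hle : LinearMap.range N.mulVecLin ≤ LinearMap.ker M.mulVecLin := by
    rintro _ ⟨y, rfl⟩
    simp [LinearMap.mem_ker, Matrix.mulVecLin_apply, Matrix.mulVec_mulVec, hMN]
  have h1 := LinearMap.finrank_range_add_finrank_ker M.mulVecLin
  rw [Module.finrank_fin_fun] at h1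
  have h2 : finrank ℝ (LinearMap.range N.mulVecLin) = finrank ℝ (LinearMap.ker M.mulVecLin) := by
    unfold Matrix.rank at hdim
    omega
  exact (Submodule.eq_of_le_of_finrank_eq hle h2).symm

lemma aux_inj_s4 {p q : ℕ} (M : Matrix (Fin p) (Fin q) ℝ) (h : M.rank = q) :
    Function.Injective M.mulVec := by
  have h1 := LinearMap.finrank_range_add_finrank_ker M.mulVecLin
  rw [Module.finrank_fin_fun] at h1
  unfold Matrix.rank at h
  have hk : finrank ℝ (LinearMap.ker M.mulVecLin) = 0 := by omega
  have : LinearMap.ker M.mulVecLin = ⊥ := Submodule.finrank_eq_zero.mp hk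
  have := LinearMap.ker_eq_bot.mp this
  simpa [Function.Injective, Matrix.mulVecLin_apply] using this

lemma aux_log_prod_rpow {n : ℕ} (v : Fin n → ℝ) (hv : ∀ i, 0 < v i) (b : Fin n → ℝ) :
    Real.log (∏ i, v i ^ b i) = ∑ i, b i * Real.log (v i) := by
  rw [Real.log_prod]
  · exact Finset.sum_congr rfl fun i _ => Real.log_rpow (hv i) _
  · exact fun i _ => (Real.rpow_pos_of_pos (hv i) _).ne'

/-- A positive solution of the sparse system with support `a` and coefficient matrix `C`. -/
def IsPosSol (d n : ℕ) (a : Fin n → Fin d → ℝ) (C : Matrix (Fin d) (Fin n) ℝ)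
    (x : Fin d → ℝ) : Prop :=
  (∀ l, 0 < x l) ∧ ∀ i, ∑ j, C i j * ∏ l, x l ^ a j l = 0

/-- A solution of the Gale dual system lying in the open cone `𝒞_P^ν`. -/
def IsGaleSol (n k : ℕ) (B : Matrix (Fin n) (Fin k) ℝ)
    (D : Matrix (Fin n) (Fin (k + 1)) ℝ) (y : Fin (k + 1) → ℝ) : Prop :=
  (∀ i, 0 < D.mulVec y i) ∧ ∀ j, ∏ i, (D.mulVec y i) ^ B i j = 1

/-- Gale duality for positive solutions: the map sending a positive
solution `x` to the unique `y` with `x^{a_i} = ⟨P_i, y⟩` gives a bijection between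
positive solutions of the original system and solutions of the Gale dual system in
`𝒞_P^ν` up to positive scaling. -/
theorem gale_duality_bijection
    (d k : ℕ) (a : Fin (d + k + 1) → Fin d → ℝ)
    (A : Matrix (Fin (d + 1)) (Fin (d + k + 1)) ℝ)
    (hA1 : ∀ j, A 0 j = 1) (hA2 : ∀ j t, A t.succ j = a j t)
    (hArank : A.rank = d + 1)
    (B : Matrix (Fin (d + k + 1)) (Fin k) ℝ) (hAB : A * B = 0) (hBrank : B.rank = k)
    (C : Matrix (Fin d) (Fin (d + k + 1)) ℝ) (hCrank : C.rank = d)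
    (D : Matrix (Fin (d + k + 1)) (Fin (k + 1)) ℝ) (hCD : C * D = 0)
    (hDrank : D.rank = k + 1) :
    ∃ F : (Fin d → ℝ) → (Fin (k + 1) → ℝ),
      (∀ x, IsPosSol d (d + k + 1) a C x →
        IsGaleSol (d + k + 1) k B D (F x) ∧
        ∀ i, (∏ l, x l ^ a i l) = D.mulVec (F x) i) ∧
      (∀ x x', IsPosSol d (d + k + 1) a C x → IsPosSol d (d + k + 1) a C x' →
        (∃ α : ℝ, 0 < α ∧ F x = α • F x') → x = x') ∧
      (∀ y, IsGaleSol (d + k + 1) k B D y →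
        ∃ x, IsPosSol d (d + k + 1) a C x ∧ ∃ α : ℝ, 0 < α ∧ y = α • F x) := by
  classical
  -- key linear algebra facts
  have hker1 : LinearMap.ker C.mulVecLin = LinearMap.range D.mulVecLin :=
    aux_ker_eq_range C D hCD (by omega)
  have hker2 : LinearMap.ker Bᵀ.mulVecLin = LinearMap.range Aᵀ.mulVecLin := by
    refine aux_ker_eq_range Bᵀ Aᵀ ?_ ?_
    · rw [← Matrix.transpose_mul, hAB, Matrix.transpose_zero]
    · rw [Matrix.rank_transpose, Matrix.rank_transpose, hArank, hBrank]; omega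
  have hDinj : Function.Injective D.mulVec := aux_inj_s4 D hDrank
  have hATinj : Function.Injective Aᵀ.mulVec := by
    refine aux_inj_s4 Aᵀ ?_
    rw [Matrix.rank_transpose, hArank]
  -- zero entries of A*B
  have hAB0 : ∀ (t : Fin (d + 1)) (j : Fin k), ∑ i, A t i * B i j = 0 := by
    intro t j
    have := congrFun (congrFun hAB t) j
    rwa [Matrix.mul_apply, Matrix.zero_apply] at this
  -- existence of the Gale vector
  have hexists : ∀ x, IsPosSol d (d + k + 1) a C x →
      ∃ y, D.mulVec y = fun i => ∏ l, x l ^ a i l := by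
    intro x hx
    have hmem : (fun i => ∏ l, x l ^ a i l) ∈ LinearMap.ker C.mulVecLin := by
      rw [LinearMap.mem_ker]
      funext i
      simpa [Matrix.mulVecLin_apply, Matrix.mulVec, dotProduct] using hx.2 i
    rw [hker1] at hmem
    obtain ⟨y, hy⟩ := hmem
    exact ⟨y, hy⟩
  refine ⟨fun x => if h : ∃ y, D.mulVec y = fun i => ∏ l, x l ^ a i l then h.choose else 0,
      ?_, ?_, ?_⟩
  · -- forward direction
    intro x hx
    beta_reduce
    have h := hexists x hx
    have hF : D.mulVec (if h : ∃ y, D.mulVec y = fun i => ∏ l, x l ^ a i l then h.choose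
        else 0) = fun i => ∏ l, x l ^ a i l := by
      rw [dif_pos h]; exact h.choose_spec
    have hpos : ∀ i, 0 < ∏ l, x l ^ a i l := fun i =>
      Finset.prod_pos fun l _ => Real.rpow_pos_of_pos (hx.1 l) _
    unfold IsGaleSol
    rw [hF]
    refine ⟨⟨hpos, ?_⟩, fun i => rfl⟩
    intro j
    have hP : 0 < ∏ i, (∏ l, x l ^ a i l) ^ B i j :=
      Finset.prod_pos fun i _ => Real.rpow_pos_of_pos (hpos i) _
    have hlog : Real.log (∏ i, (∏ l, x l ^ a i l) ^ B i j) = 0 := by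
      rw [aux_log_prod_rpow _ hpos]
      have : ∀ i : Fin (d + k + 1), Real.log (∏ l, x l ^ a i l)
          = ∑ l, a i l * Real.log (x l) := fun i => aux_log_prod_rpow x hx.1 _
      calc ∑ i, B i j * Real.log (∏ l, x l ^ a i l)
          = ∑ i, ∑ l, B i j * (a i l * Real.log (x l)) := by
            simp_rw [this, Finset.mul_sum]
        _ = ∑ l, (∑ i, A (Fin.succ l) i * B i j) * Real.log (x l) := by
            rw [Finset.sum_comm]
            refine Finset.sum_congr rfl fun l _ => ?_
            rw [Finset.sum_mul]
            refine Finset.sum_congr rfl fun i _ => ?_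
            rw [hA2]; ring
        _ = 0 := by simp [hAB0]
    have := Real.exp_log hP
    rw [hlog, Real.exp_zero] at this
    exact this.symm
  · -- injectivity
    intro x x' hx hx' ⟨α, hα, hFe⟩
    beta_reduce at hFe
    have h := hexists x hx
    have h' := hexists x' hx'
    have hFx : D.mulVec (if h : ∃ y, D.mulVec y = fun i => ∏ l, x l ^ a i l then h.choose
        else 0) = fun i => ∏ l, x l ^ a i l := by
      rw [dif_pos h]; exact h.choose_spec
    have hFx' : D.mulVec (if h : ∃ y, D.mulVec y = fun i => ∏ l, x' l ^ a i l then h.choose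
        else 0) = fun i => ∏ l, x' l ^ a i l := by
      rw [dif_pos h']; exact h'.choose_spec
    have hv : ∀ i, (∏ l, x l ^ a i l) = α * ∏ l, x' l ^ a i l := by
      intro i
      calc (∏ l, x l ^ a i l) = D.mulVec _ i := (congrFun hFx i).symm
        _ = α * ∏ l, x' l ^ a i l := by
            rw [hFe, Matrix.mulVec_smul, Pi.smul_apply, smul_eq_mul, hFx']
    -- take logs
    have hlog : ∀ i, ∑ l, a i l * Real.log (x l)
        = Real.log α + ∑ l, a i l * Real.log (x' l) := by
      intro i
      have h1 : Real.log (∏ l, x l ^ a i l) = ∑ l, a i l * Real.log (x l) :=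
        aux_log_prod_rpow x hx.1 _
      have h2 : Real.log (∏ l, x' l ^ a i l) = ∑ l, a i l * Real.log (x' l) :=
        aux_log_prod_rpow x' hx'.1 _
      have hpos' : 0 < ∏ l, x' l ^ a i l :=
        Finset.prod_pos fun l _ => Real.rpow_pos_of_pos (hx'.1 l) _
      rw [← h1, ← h2, hv i, Real.log_mul hα.ne' hpos'.ne']
    set z : Fin (d + 1) → ℝ :=
      Fin.cons (-Real.log α) (fun l => Real.log (x l) - Real.log (x' l)) with hz
    have hAz : Aᵀ.mulVec z = 0 := by
      funext i
      have : Aᵀ.mulVec z i = ∑ t, A t i * z t := by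
        simp [Matrix.mulVec, dotProduct, Matrix.transpose_apply]
      rw [this, Fin.sum_univ_succ]
      simp only [hz, Fin.cons_zero, Fin.cons_succ, hA1, hA2, Pi.zero_apply]
      have := hlog i
      simp only [mul_sub]
      rw [Finset.sum_sub_distrib]
      rw [hlog i]
      ring
    have hz0 : z = 0 := hATinj (by rw [hAz, Matrix.mulVec_zero])
    funext l
    have := congrFun hz0 l.succ
    simp only [hz, Fin.cons_succ, Pi.zero_apply, sub_eq_zero] at this
    have := Real.exp_eq_exp.mpr this
    rwa [Real.exp_log (hx.1 l), Real.exp_log (hx'.1 l)] at this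
  · -- surjectivity
    intro y hy
    set v : Fin (d + k + 1) → ℝ := D.mulVec y with hvdef
    have hBw : Bᵀ.mulVec (fun i => Real.log (v i)) = 0 := by
      funext j
      have h1 : Bᵀ.mulVec (fun i => Real.log (v i)) j = ∑ i, B i j * Real.log (v i) := by
        simp [Matrix.mulVec, dotProduct, Matrix.transpose_apply]
      rw [h1]
      have := aux_log_prod_rpow v hy.1 (fun i => B i j)
      rw [hy.2 j, Real.log_one] at this
      rw [← this]
      rfl
    have hmem : (fun i => Real.log (v i)) ∈ LinearMap.range Aᵀ.mulVecLin := by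
      rw [← hker2, LinearMap.mem_ker]
      simpa only [Matrix.mulVecLin_apply] using hBw
    obtain ⟨z, hzdef⟩ := hmem
    have hz : ∀ i, z 0 + ∑ l, a i l * z l.succ = Real.log (v i) := by
      intro i
      have := congrFun hzdef i
      simp only [Matrix.mulVecLin_apply] at this
      have h1 : Aᵀ.mulVec z i = ∑ t, A t i * z t := by
        simp [Matrix.mulVec, dotProduct, Matrix.transpose_apply]
      rw [h1, Fin.sum_univ_succ] at this
      simp only [hA1, hA2, one_mul] at this
      rw [← this]
    set x : Fin d → ℝ := fun l => Real.exp (z l.succ) with hxdef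
    set β : ℝ := Real.exp (z 0) with hβdef
    have hβpos : 0 < β := Real.exp_pos _
    have hxv : ∀ i, (∏ l, x l ^ a i l) = v i / β := by
      intro i
      have h1 : ∀ l, x l ^ a i l = Real.exp (a i l * z l.succ) := by
        intro l
        rw [hxdef, ← Real.exp_mul]
        ring_nf
      calc (∏ l, x l ^ a i l) = ∏ l, Real.exp (a i l * z l.succ) := by
            exact Finset.prod_congr rfl fun l _ => h1 l
        _ = Real.exp (∑ l, a i l * z l.succ) := by rw [Real.exp_sum]
        _ = Real.exp (Real.log (v i) - z 0) := by rw [← hz i]; ring_nf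
        _ = v i / β := by rw [Real.exp_sub, Real.exp_log (hy.1 i), hβdef]
    have hCv : C.mulVec v = 0 := by
      rw [hvdef, Matrix.mulVec_mulVec, hCD, Matrix.zero_mulVec]
    have hxsol : IsPosSol d (d + k + 1) a C x := by
      refine ⟨fun l => Real.exp_pos _, fun i => ?_⟩
      have : ∑ j, C i j * (v j / β) = 0 := by
        have h2 : C.mulVec v i = 0 := congrFun hCv i
        have h3 : C.mulVec v i = ∑ j, C i j * v j := by
          simp [Matrix.mulVec, dotProduct]
        have : ∑ j, C i j * (v j / β) = (∑ j, C i j * v j) / β := by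
          rw [Finset.sum_div]
          exact Finset.sum_congr rfl fun j _ => by ring
        rw [this, ← h3, h2, zero_div]
      calc ∑ j, C i j * ∏ l, x l ^ a j l = ∑ j, C i j * (v j / β) := by
            exact Finset.sum_congr rfl fun j _ => by rw [hxv j]
        _ = 0 := this
    refine ⟨x, hxsol, β, hβpos, ?_⟩
    beta_reduce
    have h := hexists x hxsol
    have hF : D.mulVec (if h : ∃ y, D.mulVec y = fun i => ∏ l, x l ^ a i l then h.choose
        else 0) = fun i => ∏ l, x l ^ a i l := by
      rw [dif_pos h]; exact h.choose_spec
    apply hDinj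
    rw [Matrix.mulVec_smul, hF]
    funext i
    simp only [Pi.smul_apply, smul_eq_mul]
    rw [hxv i]
    field_simp
    rfl
end

section
/- Let x ∈ ℝ_{>0}^d be a positive solution of the system Σ_{j=1}^n c_{ij} x^{a_j} = 0 (i=1,...,d), where C has maximal rank d and D is a Gale dual matrix of C with rows P_1,...,P_n ∈ ℝ^{k+1}. Then there exists a unique y ∈ ℝ^{k+1} with x^{a_i} = ⟨P_i, y⟩ for i = 1,...,n, this y satisfies ⟨P_i, y⟩ > 0 for all i, and y satisfies ∏_{i=1}^n ⟨P_i,y⟩^{b_{ij}} = 1 for every j, where b_{ij} are the entries of any Gale dual matrix B of A. -/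
/-- given a positive solution `x` of the system, there is a unique
`y ∈ ℝ^{k+1}` with `x^{a_i} = ⟨P_i, y⟩` for all `i`; this `y` satisfies
`⟨P_i, y⟩ > 0` for all `i` and solves the Gale dual system. -/
theorem positive_solution_gives_gale_solution
    (d k : ℕ) (a : Fin (d + k + 1) → Fin d → ℝ)
    (A : Matrix (Fin (d + 1)) (Fin (d + k + 1)) ℝ)
    (hA1 : ∀ j, A 0 j = 1) (hA2 : ∀ j t, A t.succ j = a j t)
    (hArank : A.rank = d + 1)
    (B : Matrix (Fin (d + k + 1)) (Fin k) ℝ) (hAB : A * B = 0) (hBrank : B.rank = k)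
    (C : Matrix (Fin d) (Fin (d + k + 1)) ℝ) (hCrank : C.rank = d)
    (D : Matrix (Fin (d + k + 1)) (Fin (k + 1)) ℝ) (hCD : C * D = 0)
    (hDrank : D.rank = k + 1)
    (x : Fin d → ℝ) (hx : ∀ l, 0 < x l)
    (hsol : ∀ i, ∑ j, C i j * ∏ l, x l ^ a j l = 0) :
    ∃ y : Fin (k + 1) → ℝ,
      (∀ i, (∏ l, x l ^ a i l) = D.mulVec y i) ∧
      (∀ y' : Fin (k + 1) → ℝ, (∀ i, (∏ l, x l ^ a i l) = D.mulVec y' i) → y' = y) ∧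
      (∀ i, 0 < D.mulVec y i) ∧
      (∀ j, ∏ i, (D.mulVec y i) ^ B i j = 1) := by
  set v : Fin (d + k + 1) → ℝ := fun i => ∏ l, x l ^ a i l with hv
  have hvpos : ∀ i, 0 < v i := fun i =>
    Finset.prod_pos fun l _ => Real.rpow_pos_of_pos (hx l) _
  -- v ∈ ker C
  have hkerv : C.mulVecLin v = 0 := by
    ext i
    simpa [Matrix.mulVecLin_apply, Matrix.mulVec, dotProduct] using hsol i
  -- range D = ker C
  have hle : LinearMap.range D.mulVecLin ≤ LinearMap.ker C.mulVecLin := by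
    rintro _ ⟨y, rfl⟩
    simp only [LinearMap.mem_ker, Matrix.mulVecLin_apply, Matrix.mulVec_mulVec, hCD,
      Matrix.zero_mulVec]
  have hrankC : Module.finrank ℝ (LinearMap.range C.mulVecLin) = d := hCrank
  have hrankD : Module.finrank ℝ (LinearMap.range D.mulVecLin) = k + 1 := hDrank
  have hkerdim : Module.finrank ℝ (LinearMap.ker C.mulVecLin) = k + 1 := by
    have h := LinearMap.finrank_range_add_finrank_ker C.mulVecLin
    simp only [hrankC, Module.finrank_fintype_fun_eq_card, Fintype.card_fin] at h
    omega
  have heq : LinearMap.range D.mulVecLin = LinearMap.ker C.mulVecLin :=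
    Submodule.eq_of_le_of_finrank_eq hle (by rw [hrankD, hkerdim])
  -- D injective
  have hDinj : Function.Injective D.mulVecLin := by
    rw [← LinearMap.ker_eq_bot]
    have h := LinearMap.finrank_range_add_finrank_ker D.mulVecLin
    simp only [hrankD, Module.finrank_fintype_fun_eq_card, Fintype.card_fin] at h
    exact Submodule.finrank_eq_zero.mp (by omega)
  obtain ⟨y, hy⟩ : v ∈ LinearMap.range D.mulVecLin := heq ▸ hkerv
  have hy' : ∀ i, v i = D.mulVec y i := fun i => (congrFun hy i).symm
  -- the key orthogonality
  have hAB' : ∀ (t : Fin d) (j : Fin k), ∑ i, a i t * B i j = 0 := by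
    intro t j
    have h := congrFun (congrFun hAB t.succ) j
    simpa [Matrix.mul_apply, hA2] using h
  refine ⟨y, hy', ?_, ?_, ?_⟩
  · intro y' hy'eq
    apply hDinj
    ext i
    simp only [Matrix.mulVecLin_apply]
    rw [← hy'eq i]; exact hy' i
  · intro i
    rw [← hy' i]; exact hvpos i
  · intro j
    have h1 : ∀ i, Real.log (v i) = ∑ l, a i l * Real.log (x l) := by
      intro i
      rw [hv]
      rw [Real.log_prod (fun l _ => (Real.rpow_pos_of_pos (hx l) _).ne')]
      exact Finset.sum_congr rfl fun l _ => Real.log_rpow (hx l) _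
    have h2 : ∏ i, (D.mulVec y i) ^ B i j = Real.exp (∑ i, Real.log (v i) * B i j) := by
      rw [Real.exp_sum]
      refine Finset.prod_congr rfl fun i _ => ?_
      rw [← hy' i, Real.rpow_def_of_pos (hvpos i)]
    rw [h2]
    have h3 : ∑ i, Real.log (v i) * B i j = 0 := by
      calc ∑ i, Real.log (v i) * B i j
          = ∑ i, ∑ l, Real.log (x l) * (a i l * B i j) := by
            refine Finset.sum_congr rfl fun i _ => ?_
            rw [h1 i, Finset.sum_mul]
            exact Finset.sum_congr rfl fun l _ => by ring
        _ = ∑ l, Real.log (x l) * ∑ i, a i l * B i j := by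
            rw [Finset.sum_comm]
            exact Finset.sum_congr rfl fun l _ => (Finset.mul_sum _ _ _).symm
        _ = 0 := by simp [hAB']
    rw [h3, Real.exp_zero]
end

section
/- Let B ∈ ℝ^{n×k} be Gale dual to A and D ∈ ℝ^{n×(k+1)} Gale dual to C with rows P_i, and define p_i(y) = ⟨P_i, (1,y)⟩ for y ∈ ℝ^k and g_j(y) = ∏_{b_{ij}>0} p_i(y)^{b_{ij}} − ∏_{b_{ij}<0} p_i(y)^{−b_{ij}}. Let F_i be a facet of Δ_P supported on {p_i = 0} and x a point in the relative interior of F_i. If b_{ij} ≠ 0 then sign(g_j(x)) = −sign(b_{ij}). -/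
/-- The affine forms `p_i(y) = ⟨P_i, (1,y)⟩` cut out by the rows of the Gale dual `D`. -/
noncomputable def galeP (n k : ℕ) (D : Matrix (Fin n) (Fin (k + 1)) ℝ)
    (i : Fin n) (y : Fin k → ℝ) : ℝ :=
  D.mulVec (Fin.cons 1 y) i

/-- The Gale polynomial map
`g_j(y) = ∏_{b_{ij}>0} p_i(y)^{b_{ij}} − ∏_{b_{ij}<0} p_i(y)^{−b_{ij}}`. -/
noncomputable def galeG (n k : ℕ) (B : Matrix (Fin n) (Fin k) ℝ)
    (D : Matrix (Fin n) (Fin (k + 1)) ℝ) (j : Fin k) (y : Fin k → ℝ) : ℝ :=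
  (∏ i ∈ Finset.univ.filter (fun i => 0 < B i j), galeP n k D i y ^ B i j) -
    ∏ i ∈ Finset.univ.filter (fun i => B i j < 0), galeP n k D i y ^ (-(B i j))

/-! At `x` only the factor `p_i` vanishes, and `b_{ij} ≠ 0` puts it in exactly one of the two
monomials of `g_j`: that monomial is `0`, the other is a product of positive powers. Hence
`g_j(x)` is `-(positive)` when `b_{ij} > 0` and `positive` when `b_{ij} < 0`. -/

namespace Finset

variable {ι : Type*} (s : Finset ι) (p e : ι → ℝ) {i : ι}

theorem prod_rpow_eq_zero_of_mem (hi : i ∈ s) (h0 : p i = 0) (he : e i ≠ 0) :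
    ∏ l ∈ s, p l ^ e l = 0 :=
  prod_eq_zero hi (by rw [h0, Real.zero_rpow he])

theorem prod_rpow_pos_of_notMem (hi : i ∉ s) (hpos : ∀ l, l ≠ i → 0 < p l) :
    0 < ∏ l ∈ s, p l ^ e l :=
  prod_pos fun l hl => Real.rpow_pos_of_pos (hpos l (ne_of_mem_of_not_mem hl hi)) _

end Finset

open Finset in
theorem Real.sign_prod_rpow_sub_prod_rpow {ι : Type*} [Fintype ι] (p b : ι → ℝ) {i : ι}
    (h0 : p i = 0) (hpos : ∀ l, l ≠ i → 0 < p l) (hb : b i ≠ 0) :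
    Real.sign ((∏ l ∈ univ.filter (fun l => 0 < b l), p l ^ b l) -
        ∏ l ∈ univ.filter (fun l => b l < 0), p l ^ (-b l)) = -Real.sign (b i) := by
  rcases hb.lt_or_gt with hneg | hposb
  · have hvanish : ∏ l ∈ univ.filter (fun l => b l < 0), p l ^ (-b l) = 0 :=
      prod_rpow_eq_zero_of_mem _ p _ (by simpa using hneg) h0 (neg_ne_zero.mpr hb)
    have hpositive : 0 < ∏ l ∈ univ.filter (fun l => 0 < b l), p l ^ b l :=
      prod_rpow_pos_of_notMem _ p b (by simp [hneg.le]) hpos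
    rw [hvanish, sub_zero, Real.sign_of_pos hpositive, Real.sign_of_neg hneg, neg_neg]
  · have hvanish : ∏ l ∈ univ.filter (fun l => 0 < b l), p l ^ b l = 0 :=
      prod_rpow_eq_zero_of_mem _ p b (by simpa using hposb) h0 hb
    have hpositive : 0 < ∏ l ∈ univ.filter (fun l => b l < 0), p l ^ (-b l) :=
      prod_rpow_pos_of_notMem _ p _ (by simp [hposb.le]) hpos
    rw [hvanish, zero_sub, Real.sign_of_neg (neg_neg_iff_pos.mpr hpositive),
      Real.sign_of_pos hposb]

/-- Lemma on the sign of `g` on facets, part (1): if `x` lies in the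
relative interior of the facet `F_i` of `Δ_P` (so `p_i(x) = 0` and `p_ℓ(x) > 0` for
`ℓ ≠ i`) and `b_{ij} ≠ 0`, then `sign(g_j(x)) = −sign(b_{ij})`. -/
theorem sign_of_g_on_facet
    (n k : ℕ) (B : Matrix (Fin n) (Fin k) ℝ) (D : Matrix (Fin n) (Fin (k + 1)) ℝ)
    (i : Fin n) (j : Fin k) (x : Fin k → ℝ)
    (hzero : galeP n k D i x = 0)
    (hpos : ∀ l, l ≠ i → 0 < galeP n k D l x)
    (hb : B i j ≠ 0) :
    Real.sign (galeG n k B D j x) = -Real.sign (B i j) :=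
  Real.sign_prod_rpow_sub_prod_rpow (fun l => galeP n k D l x) (fun l => B l j) hzero hpos hb
end

section
/- With the notation above, let L be a subset of indices such that F_L = ∩_{ℓ∈L} F_ℓ is a face of Δ_P, let x ∈ F_L, and fix j ∈ {1,...,k} with {b_{ℓj} : ℓ ∈ L} ≠ {0}. Then: (i) if there exist ℓ_0, ℓ_1 ∈ L with b_{ℓ_0 j}·b_{ℓ_1 j} < 0, then g_j(x) = 0; (ii) if b_{ℓj} ≥ 0 for all ℓ ∈ L then g_j(x) < 0, and if b_{ℓj} ≤ 0 for all ℓ ∈ L then g_j(x) > 0. -/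
open Finset

namespace Finset

variable {ι : Type*} {s : Finset ι} {f e : ι → ℝ}

theorem prod_rpow_eq_zero {i : ι} (hi : i ∈ s) (hf : f i = 0) (he : e i ≠ 0) :
    ∏ i ∈ s, f i ^ e i = 0 :=
  prod_eq_zero hi (by rw [hf, Real.zero_rpow he])

theorem prod_rpow_pos (hf : ∀ i ∈ s, 0 < f i) : 0 < ∏ i ∈ s, f i ^ e i :=
  prod_pos fun i hi => Real.rpow_pos_of_pos (hf i hi) _

end Finset

noncomputable def galeGPos (n k : ℕ) (B : Matrix (Fin n) (Fin k) ℝ)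
    (D : Matrix (Fin n) (Fin (k + 1)) ℝ) (j : Fin k) (y : Fin k → ℝ) : ℝ :=
  ∏ i ∈ univ.filter (fun i => 0 < B i j), galeP n k D i y ^ B i j

noncomputable def galeGNeg (n k : ℕ) (B : Matrix (Fin n) (Fin k) ℝ)
    (D : Matrix (Fin n) (Fin (k + 1)) ℝ) (j : Fin k) (y : Fin k → ℝ) : ℝ :=
  ∏ i ∈ univ.filter (fun i => B i j < 0), galeP n k D i y ^ (-(B i j))

section GaleMonomials

variable {n k : ℕ} {B : Matrix (Fin n) (Fin k) ℝ} {D : Matrix (Fin n) (Fin (k + 1)) ℝ}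
  {L : Finset (Fin n)} {j : Fin k} {x : Fin k → ℝ}

theorem galeG_eq_sub : galeG n k B D j x = galeGPos n k B D j x - galeGNeg n k B D j x := rfl

theorem galeGPos_eq_zero {l : Fin n} (hl : galeP n k D l x = 0) (hb : 0 < B l j) :
    galeGPos n k B D j x = 0 :=
  prod_rpow_eq_zero (mem_filter.2 ⟨mem_univ l, hb⟩) hl hb.ne'

theorem galeGNeg_eq_zero {l : Fin n} (hl : galeP n k D l x = 0) (hb : B l j < 0) :
    galeGNeg n k B D j x = 0 :=
  prod_rpow_eq_zero (mem_filter.2 ⟨mem_univ l, hb⟩) hl (neg_ne_zero.2 hb.ne)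

theorem galeGPos_pos (hpos : ∀ i, i ∉ L → 0 < galeP n k D i x) (hL : ∀ l ∈ L, B l j ≤ 0) :
    0 < galeGPos n k B D j x :=
  prod_rpow_pos fun i hi =>
    hpos i fun hiL => (hL i hiL).not_gt (mem_filter.1 hi).2

theorem galeGNeg_pos (hpos : ∀ i, i ∉ L → 0 < galeP n k D i x) (hL : ∀ l ∈ L, 0 ≤ B l j) :
    0 < galeGNeg n k B D j x :=
  prod_rpow_pos fun i hi =>
    hpos i fun hiL => (hL i hiL).not_gt (mem_filter.1 hi).2

end GaleMonomials

/-- Lemma on the sign of `g` on faces, part (2): let `x ∈ F_L`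
(so `p_ℓ(x) = 0` for `ℓ ∈ L` and `p_i(x) > 0` otherwise) and let `j` be such that
the entries `b_{ℓj}`, `ℓ ∈ L`, are not all zero. (i) If two of them have opposite
strict signs, then `g_j(x) = 0`. (ii) If they are all `≥ 0` then `g_j(x) < 0`, and
if they are all `≤ 0` then `g_j(x) > 0`. -/
theorem sign_of_g_on_face
    (n k : ℕ) (B : Matrix (Fin n) (Fin k) ℝ) (D : Matrix (Fin n) (Fin (k + 1)) ℝ)
    (L : Finset (Fin n)) (x : Fin k → ℝ)
    (hzero : ∀ l ∈ L, galeP n k D l x = 0)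
    (hpos : ∀ i, i ∉ L → 0 < galeP n k D i x)
    (j : Fin k) (hnotall : ∃ l ∈ L, B l j ≠ 0) :
    ((∃ l₀ ∈ L, ∃ l₁ ∈ L, B l₀ j * B l₁ j < 0) → galeG n k B D j x = 0) ∧
    ((∀ l ∈ L, 0 ≤ B l j) → galeG n k B D j x < 0) ∧
    ((∀ l ∈ L, B l j ≤ 0) → 0 < galeG n k B D j x) := by
  obtain ⟨l, hl, hb⟩ := hnotall
  refine ⟨?_, fun hL => ?_, fun hL => ?_⟩
  · rintro ⟨l₀, hl₀, l₁, hl₁, hmul⟩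
    rw [galeG_eq_sub]
    rcases mul_neg_iff.1 hmul with ⟨h₀, h₁⟩ | ⟨h₀, h₁⟩
    · rw [galeGPos_eq_zero (hzero l₀ hl₀) h₀, galeGNeg_eq_zero (hzero l₁ hl₁) h₁, sub_zero]
    · rw [galeGPos_eq_zero (hzero l₁ hl₁) h₁, galeGNeg_eq_zero (hzero l₀ hl₀) h₀, sub_zero]
  · rw [galeG_eq_sub, galeGPos_eq_zero (hzero l hl) ((hL l hl).lt_of_ne' hb), zero_sub,
      neg_lt_zero]
    exact galeGNeg_pos hpos hL
  · rw [galeG_eq_sub, galeGNeg_eq_zero (hzero l hl) ((hL l hl).lt_of_ne hb), sub_zero]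
    exact galeGPos_pos hpos hL
end

section
/- With the notation above, suppose g(x) = 0 for some x lying in the face F_L of Δ_P. Then for each j = 1,...,k, either b_{ℓj} = 0 for all ℓ ∈ L, or the set {b_{ℓj} : ℓ ∈ L} contains both a strictly positive and a strictly negative element. In particular, if g vanishes at a point in the relative interior of a facet F_ℓ, then the ℓ-th row of B is zero. -/
/-! On `F_L` the affine forms `p_ℓ`, `ℓ ∈ L`, vanish and the others are positive, so each of the
two products in `g_j(x)` vanishes exactly when one of its exponents `b_{ℓj}` with `ℓ ∈ L` is
nonzero. As `g_j(x) = 0` makes the two products equal, `b_{·j}` has a positive entry on `L` iff it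
has a negative one. -/

open Finset

theorem Finset.prod_rpow_eq_zero_iff {ι : Type*} {L : Set ι} {p : ι → ℝ}
    (hzero : ∀ i ∈ L, p i = 0) (hpos : ∀ i ∉ L, 0 < p i) {s : Finset ι} {e : ι → ℝ}
    (he : ∀ i ∈ s, e i ≠ 0) :
    ∏ i ∈ s, p i ^ e i = 0 ↔ ∃ i ∈ s, i ∈ L := by
  rw [prod_eq_zero_iff]
  refine exists_congr fun i => and_congr_right fun hi => ?_
  by_cases hiL : i ∈ L
  · simpa [hiL, hzero i hiL] using Real.zero_rpow (he i hi)
  · simpa [hiL] using (Real.rpow_pos_of_pos (hpos i hiL) (e i)).ne'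

theorem exists_pos_iff_exists_neg_of_galeG_eq_zero {n k : ℕ} {B : Matrix (Fin n) (Fin k) ℝ}
    {D : Matrix (Fin n) (Fin (k + 1)) ℝ} {L : Finset (Fin n)} {x : Fin k → ℝ}
    (hzero : ∀ l ∈ L, galeP n k D l x = 0) (hpos : ∀ i, i ∉ L → 0 < galeP n k D i x)
    {j : Fin k} (hg : galeG n k B D j x = 0) :
    (∃ l ∈ L, 0 < B l j) ↔ ∃ l ∈ L, B l j < 0 := by
  have hprod := (congrArg (· = (0 : ℝ)) (sub_eq_zero.mp hg)).to_iff
  rw [prod_rpow_eq_zero_iff (L := (L : Set (Fin n))) hzero hpos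
      fun i hi => (mem_filter.mp hi).2.ne',
    prod_rpow_eq_zero_iff (L := (L : Set (Fin n))) hzero hpos
      fun i hi => neg_ne_zero.mpr (mem_filter.mp hi).2.ne] at hprod
  simpa only [mem_filter, mem_univ, true_and, mem_coe, exists_prop, and_comm] using hprod

theorem forall_eq_zero_or_exists_pos_and_exists_neg {ι : Type*} {L : Set ι} {b : ι → ℝ}
    (h : (∃ l ∈ L, 0 < b l) ↔ ∃ l ∈ L, b l < 0) :
    (∀ l ∈ L, b l = 0) ∨ ((∃ l ∈ L, 0 < b l) ∧ ∃ l ∈ L, b l < 0) := by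
  by_cases hall : ∀ l ∈ L, b l = 0
  · exact Or.inl hall
  push Not at hall
  obtain ⟨l, hl, hne⟩ := hall
  rcases hne.lt_or_gt with hneg | hpos
  · exact Or.inr ⟨h.mpr ⟨l, hl, hneg⟩, l, hl, hneg⟩
  · exact Or.inr ⟨⟨l, hl, hpos⟩, h.mp ⟨l, hl, hpos⟩⟩

/-- Corollary: where `g` can vanish on the boundary: if `g(x) = 0`
for `x` in the face `F_L` of `Δ_P`, then for each `j`, either all entries `b_{ℓj}`,
`ℓ ∈ L`, vanish, or among them there is a strictly positive and a strictly negative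
one.  In particular, if `L = {ℓ}` is a singleton (so `x` is in the relative
interior of the facet `F_ℓ`) then the `ℓ`-th row of `B` is zero. -/
theorem g_vanishing_on_face
    (n k : ℕ) (B : Matrix (Fin n) (Fin k) ℝ) (D : Matrix (Fin n) (Fin (k + 1)) ℝ)
    (L : Finset (Fin n)) (x : Fin k → ℝ)
    (hzero : ∀ l ∈ L, galeP n k D l x = 0)
    (hpos : ∀ i, i ∉ L → 0 < galeP n k D i x)
    (hg : ∀ j, galeG n k B D j x = 0) :
    (∀ j, (∀ l ∈ L, B l j = 0) ∨ ((∃ l ∈ L, 0 < B l j) ∧ ∃ l ∈ L, B l j < 0)) ∧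
    (∀ l : Fin n, L = {l} → ∀ j, B l j = 0) := by
  have hsigns : ∀ j, (∀ l ∈ L, B l j = 0) ∨ ((∃ l ∈ L, 0 < B l j) ∧ ∃ l ∈ L, B l j < 0) :=
    fun j => forall_eq_zero_or_exists_pos_and_exists_neg
      (exists_pos_iff_exists_neg_of_galeG_eq_zero hzero hpos (hg j))
  refine ⟨hsigns, fun l hL j => ?_⟩
  subst hL
  simp only [mem_singleton, forall_eq, exists_eq_left] at hsigns
  exact (hsigns j).resolve_right fun ⟨hposit, hneg⟩ => lt_asymm hposit hneg
end

section
/- A real matrix that is mixed dominating has the property that every nonzero linear combination of its columns is a mixed vector; in particular, its columns are linearly independent. -/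
/-- A vector is mixed if it has a strictly positive and a strictly negative coordinate. -/
def IsMixedVec {n : ℕ} (v : Fin n → ℝ) : Prop :=
  (∃ i, 0 < v i) ∧ ∃ i, v i < 0

/-- A matrix is mixed if every column is a mixed vector. -/
def IsMixedMat {n k : ℕ} (M : Matrix (Fin n) (Fin k) ℝ) : Prop :=
  ∀ j, IsMixedVec (fun i => M i j)

/-- A matrix is dominating if it contains no (nonempty) square mixed submatrix. -/
def IsDominating {n k : ℕ} (M : Matrix (Fin n) (Fin k) ℝ) : Prop :=
  ∀ m : ℕ, 0 < m → ∀ (r : Fin m → Fin n) (c : Fin m → Fin k),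
    Function.Injective r → Function.Injective c → ¬ IsMixedMat (M.submatrix r c)

lemma key_false (n k : ℕ) (M : Matrix (Fin n) (Fin k) ℝ)
    (hmixed : IsMixedMat M) (hdom : IsDominating M)
    (t : Fin k → ℝ) (ht : t ≠ 0) (hle : ∀ i, M.mulVec t i ≤ 0) : False := by
  classical
  set N : Fin n → Fin k → ℝ := fun i j => M i j * t j with hN
  have hsum : ∀ i, ∑ j, N i j ≤ 0 := by
    intro i
    have := hle i
    simpa [Matrix.mulVec, dotProduct, hN] using this
  have hA : ∀ c : Fin k, t c ≠ 0 → ∃ r, 0 < N r c := by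
    intro c hc
    obtain ⟨⟨r1, hr1⟩, ⟨r2, hr2⟩⟩ := hmixed c
    rcases lt_or_gt_of_ne hc with h | h
    · exact ⟨r2, mul_pos_of_neg_of_neg hr2 h⟩
    · exact ⟨r1, mul_pos hr1 h⟩
  have hB : ∀ r : Fin n, (∃ c, 0 < N r c) → ∃ c', N r c' < 0 := by
    rintro r ⟨c, hc⟩
    by_contra h
    push_neg at h
    have : N r c ≤ ∑ j, N r j :=
      Finset.single_le_sum (fun j _ => h j) (Finset.mem_univ c)
    linarith [hsum r]
  have hstep : ∀ p : {p : Fin n × Fin k // 0 < N p.1 p.2},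
      ∃ q : {q : Fin n × Fin k // 0 < N q.1 q.2}, N p.1.1 q.1.2 < 0 := by
    rintro ⟨⟨r, c⟩, hp⟩
    obtain ⟨c', hc'⟩ := hB r ⟨c, hp⟩
    have htc' : t c' ≠ 0 := by
      intro h
      rw [hN] at hc'
      simp [h] at hc'
    obtain ⟨r', hr'⟩ := hA c' htc'
    exact ⟨⟨⟨r', c'⟩, hr'⟩, hc'⟩
  obtain ⟨c0, hc0⟩ : ∃ c0, t c0 ≠ 0 := Function.ne_iff.mp ht
  obtain ⟨r0, hr0⟩ := hA c0 hc0
  let F : {p : Fin n × Fin k // 0 < N p.1 p.2} → {p : Fin n × Fin k // 0 < N p.1 p.2} :=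
    fun p => Classical.choose (hstep p)
  have hF : ∀ p, N p.1.1 (F p).1.2 < 0 := fun p => Classical.choose_spec (hstep p)
  let S : ℕ → {p : Fin n × Fin k // 0 < N p.1 p.2} :=
    fun i => Nat.rec ⟨⟨r0, c0⟩, hr0⟩ (fun _ p => F p) i
  let r : ℕ → Fin n := fun i => (S i).1.1
  let c : ℕ → Fin k := fun i => (S i).1.2
  have hrc : ∀ i, 0 < N (r i) (c i) := fun i => (S i).2
  have hlink : ∀ i, N (r i) (c (i + 1)) < 0 := fun i => hF (S i)
  -- pigeonhole: some row or column index repeats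
  have hQex : ∃ b : ℕ, ∃ a, a < b ∧ (r a = r b ∨ c a = c b) := by
    obtain ⟨x, y, hxy, hgxy⟩ :=
      Fintype.exists_ne_map_eq_of_card_lt
        (fun i : Fin (n * k + 1) => ((r i, c i) : Fin n × Fin k))
        (by simp)
    have hfst : r x = r y := congrArg Prod.fst hgxy
    rcases lt_or_gt_of_ne hxy with h | h
    · exact ⟨(y : ℕ), (x : ℕ), h, Or.inl hfst⟩
    · exact ⟨(x : ℕ), (y : ℕ), h, Or.inl hfst.symm⟩
  set b := Nat.find hQex with hbdef
  have hmin : ∀ y, y < b → ∀ x, x < y → r x ≠ r y ∧ c x ≠ c y := by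
    intro y hy x hx
    have h := Nat.find_min hQex hy
    push_neg at h
    exact h x hx
  -- a square mixed N-submatrix gives a mixed M-submatrix
  have hmixcol : ∀ (m : ℕ) (ρ : Fin m → Fin n) (γ : Fin m → Fin k),
      (∀ l, (∃ i, 0 < N (ρ i) (γ l)) ∧ (∃ i, N (ρ i) (γ l) < 0)) →
      IsMixedMat (M.submatrix ρ γ) := by
    intro m ρ γ h l
    obtain ⟨⟨i0, hi0⟩, ⟨i1, hi1⟩⟩ := h l
    rw [hN] at hi0 hi1
    simp only at hi0 hi1
    show (∃ i, 0 < M (ρ i) (γ l)) ∧ (∃ i, M (ρ i) (γ l) < 0)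
    rcases lt_trichotomy (t (γ l)) 0 with hs | hs | hs
    · exact ⟨⟨i1, by nlinarith⟩, ⟨i0, by nlinarith⟩⟩
    · rw [hs] at hi0; simp at hi0
    · exact ⟨⟨i0, by nlinarith⟩, ⟨i1, by nlinarith⟩⟩
  by_cases hcb : ∃ x, x < b ∧ c x = c b
  · -- column repetition : rows r (a+l), cols c (a+l), l < m = b - a
    obtain ⟨a, ha, hca⟩ := hcb
    set m := b - a with hm
    have hm0 : 0 < m := by omega
    refine hdom m hm0 (fun l => r (a + (l : ℕ))) (fun l => c (a + (l : ℕ))) ?_ ?_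
      (hmixcol m _ _ ?_)
    · intro l1 l2 h
      have h1 := l1.isLt
      have h2 := l2.isLt
      by_contra hne
      rcases (Fin.val_ne_of_ne hne).lt_or_gt with hlt | hlt
      · exact (hmin (a + (l2 : ℕ)) (by omega) (a + (l1 : ℕ)) (by omega)).1 h
      · exact (hmin (a + (l1 : ℕ)) (by omega) (a + (l2 : ℕ)) (by omega)).1 h.symm
    · intro l1 l2 h
      have h1 := l1.isLt
      have h2 := l2.isLt
      by_contra hne
      rcases (Fin.val_ne_of_ne hne).lt_or_gt with hlt | hlt
      · exact (hmin (a + (l2 : ℕ)) (by omega) (a + (l1 : ℕ)) (by omega)).2 h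
      · exact (hmin (a + (l1 : ℕ)) (by omega) (a + (l2 : ℕ)) (by omega)).2 h.symm
    · intro l
      have hl := l.isLt
      refine ⟨⟨l, hrc (a + (l : ℕ))⟩, ?_⟩
      by_cases h0 : (l : ℕ) = 0
      · refine ⟨⟨m - 1, by omega⟩, ?_⟩
        have hb1 : a + (m - 1) + 1 = b := by omega
        have hl0 : a + (l : ℕ) = a := by omega
        have hlk := hlink (a + (m - 1))
        rw [hb1] at hlk
        rw [hl0, hca]
        exact hlk
      · refine ⟨⟨(l : ℕ) - 1, by omega⟩, ?_⟩
        have h1 : a + ((l : ℕ) - 1) + 1 = a + (l : ℕ) := by omega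
        have hlk := hlink (a + ((l : ℕ) - 1))
        rw [h1] at hlk
        exact hlk
  · -- row repetition : rows r (a+1+l), cols c (a+1+l)
    push_neg at hcb
    obtain ⟨a, ha, hab⟩ := Nat.find_spec hQex
    rw [← hbdef] at ha hab
    have hra : r a = r b := by
      rcases hab with h | h
      · exact h
      · exact absurd h (hcb a ha)
    set m := b - a with hm
    have hm0 : 0 < m := by omega
    have keyr : ∀ x y : ℕ, x < y → y ≤ b → a < x → r x = r y → False := by
      intro x y hxy hyb hax hr
      rcases eq_or_lt_of_le hyb with he | hlt
      · exact (hmin x (by omega) a hax).1 (hra.trans (he ▸ hr).symm)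
      · exact (hmin y hlt x hxy).1 hr
    have keyc : ∀ x y : ℕ, x < y → y ≤ b → c x = c y → False := by
      intro x y hxy hyb hc
      rcases eq_or_lt_of_le hyb with he | hlt
      · exact hcb x (by omega) (he ▸ hc)
      · exact (hmin y hlt x hxy).2 hc
    refine hdom m hm0 (fun l => r (a + 1 + (l : ℕ))) (fun l => c (a + 1 + (l : ℕ))) ?_ ?_
      (hmixcol m _ _ ?_)
    · intro l1 l2 h
      have h1 := l1.isLt
      have h2 := l2.isLt
      by_contra hne
      rcases (Fin.val_ne_of_ne hne).lt_or_gt with hlt | hlt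
      · exact keyr (a + 1 + (l1 : ℕ)) (a + 1 + (l2 : ℕ)) (by omega) (by omega) (by omega) h
      · exact keyr (a + 1 + (l2 : ℕ)) (a + 1 + (l1 : ℕ)) (by omega) (by omega) (by omega) h.symm
    · intro l1 l2 h
      have h1 := l1.isLt
      have h2 := l2.isLt
      by_contra hne
      rcases (Fin.val_ne_of_ne hne).lt_or_gt with hlt | hlt
      · exact keyc (a + 1 + (l1 : ℕ)) (a + 1 + (l2 : ℕ)) (by omega) (by omega) h
      · exact keyc (a + 1 + (l2 : ℕ)) (a + 1 + (l1 : ℕ)) (by omega) (by omega) h.symm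
    · intro l
      have hl := l.isLt
      refine ⟨⟨l, hrc (a + 1 + (l : ℕ))⟩, ?_⟩
      by_cases h0 : (l : ℕ) = 0
      · refine ⟨⟨m - 1, by omega⟩, ?_⟩
        have hb1 : a + 1 + (m - 1) = b := by omega
        have hl0 : a + 1 + (l : ℕ) = a + 1 := by omega
        rw [hb1, hl0, ← hra]
        exact hlink a
      · refine ⟨⟨(l : ℕ) - 1, by omega⟩, ?_⟩
        have h1 : a + 1 + ((l : ℕ) - 1) = a + ((l : ℕ) - 1 + 1) := by omega
        have h2 : (l : ℕ) - 1 + 1 + (a + 1) = a + 1 + (l : ℕ) + 1 - 1 := by omega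
        have hlk := hlink (a + (l : ℕ))
        have h3 : a + 1 + ((l : ℕ) - 1) = a + (l : ℕ) := by omega
        have h4 : a + (l : ℕ) + 1 = a + 1 + (l : ℕ) := by omega
        rw [h3, ← h4]
        exact hlk
      
lemma key_pos (n k : ℕ) (M : Matrix (Fin n) (Fin k) ℝ)
    (hmixed : IsMixedMat M) (hdom : IsDominating M)
    (t : Fin k → ℝ) (ht : t ≠ 0) : ∃ i, 0 < M.mulVec t i := by
  by_contra h
  push_neg at h
  exact key_false n k M hmixed hdom t ht h

/-- if `M` is mixed dominating then every nonzero linear combination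
of its columns is a mixed vector; in particular its columns are linearly
independent. -/
theorem mixed_dominating_combinations_mixed
    (n k : ℕ) (M : Matrix (Fin n) (Fin k) ℝ)
    (hmixed : IsMixedMat M) (hdom : IsDominating M) :
    (∀ t : Fin k → ℝ, t ≠ 0 → IsMixedVec (M.mulVec t)) ∧
    LinearIndependent ℝ (fun j => (fun i => M i j)) := by
  have hmix : ∀ t : Fin k → ℝ, t ≠ 0 → IsMixedVec (M.mulVec t) := by
    intro t ht
    refine ⟨key_pos n k M hmixed hdom t ht, ?_⟩
    obtain ⟨i, hi⟩ := key_pos n k M hmixed hdom (-t) (neg_ne_zero.mpr ht)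
    refine ⟨i, ?_⟩
    rw [Matrix.mulVec_neg] at hi
    simpa using hi
  refine ⟨hmix, ?_⟩
  rw [Fintype.linearIndependent_iff]
  intro g hg
  by_contra h
  push_neg at h
  obtain ⟨j, hj⟩ := h
  have hgne : g ≠ 0 := fun h0 => hj (congrFun h0 j)
  obtain ⟨i, hi⟩ := (hmix g hgne).1
  have : M.mulVec g i = 0 := by
    have := congrFun hg i
    simpa [Matrix.mulVec, dotProduct, Finset.sum_apply, mul_comm] using this
  rw [this] at hi
  exact lt_irrefl 0 hi
end

section
/- The left kernel of any mixed dominating real matrix contains a strictly positive vector, i.e., if M ∈ ℝ^{n×k} is mixed dominating then there exists λ ∈ ℝ^n with all coordinates positive such that λᵀM = 0. -/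
lemma mixedVec_of_smul {m : ℕ} {v : Fin m → ℝ} {c : ℝ}
    (h : IsMixedVec fun l => c * v l) : IsMixedVec v := by
  obtain ⟨⟨i, hi⟩, ⟨j, hj⟩⟩ := h
  simp only at hi hj
  rcases lt_trichotomy c 0 with hc | hc | hc
  · exact ⟨⟨j, by nlinarith⟩, ⟨i, by nlinarith⟩⟩
  · simp [hc] at hi
  · exact ⟨⟨i, by nlinarith⟩, ⟨j, by nlinarith⟩⟩

/-- Part A: a mixed dominating matrix admits no vector `y` with `M y ≥ 0`, `M y ≠ 0`. -/
lemma keyA {n k : ℕ} {M : Matrix (Fin n) (Fin k) ℝ}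
    (hmixed : IsMixedMat M) (hdom : IsDominating M)
    (y : Fin k → ℝ) (hy : ∀ i, 0 ≤ M.mulVec y i) : ∀ i, M.mulVec y i = 0 := by
  classical
  by_contra hcon
  push_neg at hcon
  obtain ⟨i0, hi0⟩ := hcon
  have hi0' : 0 < M.mulVec y i0 := lt_of_le_of_ne (hy i0) (Ne.symm hi0)
  have hsum : ∀ r, M.mulVec y r = ∑ c, y c * M r c := by
    intro r
    simp [Matrix.mulVec, dotProduct, mul_comm]
  -- from a negative entry in a row, get a positive entry in the same row
  have h1 : ∀ r c, y c * M r c < 0 → ∃ c', 0 < y c' * M r c' := by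
    intro r c hrc
    by_contra hno
    push_neg at hno
    have hle : ∑ c', y c' * M r c' = 0 :=
      le_antisymm (Finset.sum_nonpos fun i _ => hno i) (by rw [← hsum]; exact hy r)
    have := (Finset.sum_eq_zero_iff_of_nonpos (fun i _ => hno i)).mp hle c (Finset.mem_univ c)
    linarith
  -- from a positive entry in a column, get a negative entry in the same column
  have h2 : ∀ r c, 0 < y c * M r c → ∃ r', y c * M r' c < 0 := by
    intro r c hrc
    have hyc : y c ≠ 0 := by
      intro h; rw [h, zero_mul] at hrc; exact lt_irrefl 0 hrc
    obtain ⟨⟨ip, hip⟩, ⟨iq, hiq⟩⟩ := hmixed c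
    rcases hyc.lt_or_gt with h | h
    · exact ⟨ip, by nlinarith⟩
    · exact ⟨iq, by nlinarith⟩
  obtain ⟨c0, hc0⟩ : ∃ c, 0 < y c * M i0 c := by
    by_contra hno
    push_neg at hno
    have : ∑ c, y c * M i0 c ≤ 0 := Finset.sum_nonpos fun i _ => hno i
    rw [← hsum] at this
    linarith
  -- build an infinite walk alternating positive/negative entries
  obtain ⟨R, C, hpos, hneg⟩ : ∃ (R : ℕ → Fin n) (C : ℕ → Fin k),
      (∀ t, 0 < y (C t) * M (R t) (C t)) ∧ ∀ t, y (C t) * M (R (t+1)) (C t) < 0 := by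
    choose F hF using h2
    choose G hG using h1
    let T := {p : Fin n × Fin k // 0 < y p.2 * M p.1 p.2}
    let step : T → T := fun q =>
      ⟨(F q.1.1 q.1.2 q.2, G (F q.1.1 q.1.2 q.2) q.1.2 (hF q.1.1 q.1.2 q.2)),
        hG (F q.1.1 q.1.2 q.2) q.1.2 (hF q.1.1 q.1.2 q.2)⟩
    let W : ℕ → T := fun t => step^[t] ⟨(i0, c0), hc0⟩
    refine ⟨fun t => (W t).1.1, fun t => (W t).1.2, fun t => (W t).2, fun t => ?_⟩
    have h : W (t+1) = step (W t) := Function.iterate_succ_apply' step t _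
    show y (W t).1.2 * M (W (t+1)).1.1 (W t).1.2 < 0
    rw [h]
    exact hF (W t).1.1 (W t).1.2 (W t).2
  -- pigeonhole: some row or column repeats
  have hbad : ∃ b, ∃ a, a < b ∧ (R a = R b ∨ C a = C b) := by
    obtain ⟨x, y', hxy, hR⟩ := Finite.exists_ne_map_eq_of_infinite R
    rcases hxy.lt_or_gt with h | h
    · exact ⟨y', x, h, Or.inl hR⟩
    · exact ⟨x, y', h, Or.inl hR.symm⟩
  let b := Nat.find hbad
  obtain ⟨a0, ha0b, hcase⟩ : ∃ a, a < b ∧ (R a = R b ∨ C a = C b) := Nat.find_spec hbad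
  have hmin : ∀ b' < b, ¬ ∃ a, a < b' ∧ (R a = R b' ∨ C a = C b') :=
    fun b' h => Nat.find_min hbad h
  have Rinj : ∀ s t, s < t → t < b → R s ≠ R t :=
    fun s t hst htb h => hmin t htb ⟨s, hst, Or.inl h⟩
  have Cinj : ∀ s t, s < t → t < b → C s ≠ C t :=
    fun s t hst htb h => hmin t htb ⟨s, hst, Or.inr h⟩
  by_cases hRb : ∃ a', a' < b ∧ R a' = R b
  · -- a cycle closing on a row
    obtain ⟨a, hab, hRab⟩ := hRb
    set m := b - a with hmdef
    have hm0 : 0 < m := Nat.sub_pos_of_lt hab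
    have hmb : a + m = b := Nat.add_sub_cancel' hab.le
    refine hdom m hm0 (fun i => R (a + (i : ℕ))) (fun i => C (a + (i : ℕ))) ?_ ?_ ?_
    · intro i j hij
      by_contra hne
      have hi := i.isLt
      have hj := j.isLt
      have hne' : (i : ℕ) ≠ (j : ℕ) := fun h => hne (Fin.ext h)
      simp only at hij
      rcases hne'.lt_or_gt with h | h
      · exact Rinj (a + (i : ℕ)) (a + (j : ℕ)) (by omega) (by omega) hij
      · exact Rinj (a + (j : ℕ)) (a + (i : ℕ)) (by omega) (by omega) hij.symm
    · intro i j hij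
      by_contra hne
      have hi := i.isLt
      have hj := j.isLt
      have hne' : (i : ℕ) ≠ (j : ℕ) := fun h => hne (Fin.ext h)
      simp only at hij
      rcases hne'.lt_or_gt with h | h
      · exact Cinj (a + (i : ℕ)) (a + (j : ℕ)) (by omega) (by omega) hij
      · exact Cinj (a + (j : ℕ)) (a + (i : ℕ)) (by omega) (by omega) hij.symm
    · intro j
      show IsMixedVec (fun l : Fin m => M (R (a + (l : ℕ))) (C (a + (j : ℕ))))
      refine mixedVec_of_smul (c := y (C (a + (j : ℕ)))) ?_
      have hj := j.isLt
      have hkey : y (C (a + (j : ℕ))) *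
          M (R (a + (((j : ℕ) + 1) % m))) (C (a + (j : ℕ))) < 0 := by
        rcases Nat.lt_or_ge ((j : ℕ) + 1) m with h | h
        · rw [Nat.mod_eq_of_lt h, show a + ((j : ℕ) + 1) = a + (j : ℕ) + 1 by omega]
          exact hneg (a + (j : ℕ))
        · have hjm : (j : ℕ) + 1 = m := by omega
          rw [hjm, Nat.mod_self]
          have hRe : R (a + 0) = R (a + (j : ℕ) + 1) := by
            rw [show a + (j : ℕ) + 1 = b by omega, show a + 0 = a by omega]
            exact hRab
          rw [hRe]
          exact hneg (a + (j : ℕ))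
      exact ⟨⟨j, hpos (a + (j : ℕ))⟩,
        ⟨⟨((j : ℕ) + 1) % m, Nat.mod_lt _ hm0⟩, hkey⟩⟩
  · -- a cycle closing on a column
    have hCab : C a0 = C b := by
      rcases hcase with h | h
      · exact absurd ⟨a0, ha0b, h⟩ hRb
      · exact h
    have Rinjb : ∀ t, t < b → R t ≠ R b := fun t ht h => hRb ⟨t, ht, h⟩
    set a := a0 with hadef
    have hab : a < b := ha0b
    set m := b - a with hmdef
    have hm0 : 0 < m := Nat.sub_pos_of_lt hab
    have hmb : a + m = b := Nat.add_sub_cancel' hab.le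
    refine hdom m hm0 (fun i => R (a + 1 + (i : ℕ))) (fun i => C (a + 1 + (i : ℕ))) ?_ ?_ ?_
    · intro i j hij
      by_contra hne
      have hi := i.isLt
      have hj := j.isLt
      have hne' : (i : ℕ) ≠ (j : ℕ) := fun h => hne (Fin.ext h)
      simp only at hij
      have haux : ∀ s t : ℕ, s < t → t ≤ b → R s ≠ R t := by
        intro s t hst htb h
        rcases eq_or_lt_of_le htb with rfl | hlt
        · exact Rinjb s hst h
        · exact Rinj s t hst hlt h
      rcases hne'.lt_or_gt with h | h
      · exact haux (a + 1 + (i : ℕ)) (a + 1 + (j : ℕ)) (by omega) (by omega) hij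
      · exact haux (a + 1 + (j : ℕ)) (a + 1 + (i : ℕ)) (by omega) (by omega) hij.symm
    · intro i j hij
      by_contra hne
      have hi := i.isLt
      have hj := j.isLt
      have hne' : (i : ℕ) ≠ (j : ℕ) := fun h => hne (Fin.ext h)
      simp only at hij
      have haux : ∀ s t : ℕ, a < s → s < t → t ≤ b → C s ≠ C t := by
        intro s t has hst htb h
        rcases eq_or_lt_of_le htb with rfl | hlt
        · exact Cinj a s has (by omega) (hCab.trans h.symm)
        · exact Cinj s t hst hlt h
      rcases hne'.lt_or_gt with h | h
      · exact haux (a + 1 + (i : ℕ)) (a + 1 + (j : ℕ)) (by omega) (by omega) (by omega) hij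
      · exact haux (a + 1 + (j : ℕ)) (a + 1 + (i : ℕ)) (by omega) (by omega) (by omega) hij.symm
    · intro j
      show IsMixedVec (fun l : Fin m => M (R (a + 1 + (l : ℕ))) (C (a + 1 + (j : ℕ))))
      refine mixedVec_of_smul (c := y (C (a + 1 + (j : ℕ)))) ?_
      have hj := j.isLt
      have hkey : y (C (a + 1 + (j : ℕ))) *
          M (R (a + 1 + (((j : ℕ) + 1) % m))) (C (a + 1 + (j : ℕ))) < 0 := by
        rcases Nat.lt_or_ge ((j : ℕ) + 1) m with h | h
        · rw [Nat.mod_eq_of_lt h, show a + 1 + ((j : ℕ) + 1) = a + 1 + (j : ℕ) + 1 by omega]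
          exact hneg (a + 1 + (j : ℕ))
        · have hjm : (j : ℕ) + 1 = m := by omega
          have hCe : C (a + 1 + (j : ℕ)) = C a := by
            rw [show a + 1 + (j : ℕ) = b by omega]
            exact hCab.symm
          rw [hjm, Nat.mod_self, hCe, show a + 1 + 0 = a + 1 by omega]
          exact hneg a
      exact ⟨⟨j, hpos (a + 1 + (j : ℕ))⟩,
        ⟨⟨((j : ℕ) + 1) % m, Nat.mod_lt _ hm0⟩, hkey⟩⟩

/-- the left kernel of any mixed dominating real matrix contains a
strictly positive vector. -/
theorem mixed_dominating_left_kernel_positive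
    (n k : ℕ) (M : Matrix (Fin n) (Fin k) ℝ)
    (hmixed : IsMixedMat M) (hdom : IsDominating M) :
    ∃ lam : Fin n → ℝ, (∀ i, 0 < lam i) ∧ ∀ j, ∑ i, lam i * M i j = 0 := by
  classical
  have key : ∀ yv : Fin k → ℝ, (∀ i, 0 ≤ M.mulVec yv i) → ∀ i, M.mulVec yv i = 0 :=
    fun yv h => keyA hmixed hdom yv h
  set Wsub : Submodule ℝ (Fin n → ℝ) := LinearMap.range (Matrix.mulVecLin M) with hWdef
  have hclosed : IsClosed (Wsub : Set (Fin n → ℝ)) := Submodule.closed_of_finiteDimensional _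
  have hconv : Convex ℝ (Wsub : Set (Fin n → ℝ)) := Wsub.convex
  have hdisj : Disjoint (Wsub : Set (Fin n → ℝ)) (stdSimplex ℝ (Fin n)) := by
    rw [Set.disjoint_left]
    rintro x hx ⟨hx0, hx1⟩
    obtain ⟨yv, hyv⟩ := hx
    have hxeq : M.mulVec yv = x := by rw [← hyv]; exact (Matrix.mulVecLin_apply M yv)
    have hz : ∀ i, x i = 0 := by
      intro i
      rw [← hxeq]
      exact key yv (fun i' => by rw [hxeq]; exact hx0 i') i
    rw [Finset.sum_congr rfl (fun i _ => hz i)] at hx1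
    simp at hx1
  obtain ⟨f, u, v, hfu, huv, hvf⟩ :=
    geometric_hahn_banach_closed_compact hconv hclosed (convex_stdSimplex ℝ (Fin n))
      (isCompact_stdSimplex ℝ (Fin n)) hdisj
  have hu : 0 < u := by
    have := hfu 0 (Submodule.zero_mem Wsub)
    simpa using this
  have hW0 : ∀ w ∈ Wsub, f w = 0 := by
    intro w hw
    by_contra hfw
    have h1 : f (((u + 1) / f w) • w) < u := hfu _ (Wsub.smul_mem _ hw)
    rw [map_smul, smul_eq_mul, div_mul_cancel₀ _ hfw] at h1
    linarith
  have hsingle : ∀ i : Fin n, Pi.single i (1 : ℝ) ∈ stdSimplex ℝ (Fin n) := by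
    intro i
    constructor
    · intro l
      rw [Pi.single_apply]
      split <;> norm_num
    · simp [Pi.single_apply]
  refine ⟨fun i => f (Pi.single i 1), fun i => ?_, fun j => ?_⟩
  · have := hvf _ (hsingle i)
    linarith
  · have hcol : (fun i => M i j) ∈ Wsub := by
      refine ⟨Pi.single j 1, ?_⟩
      rw [Matrix.mulVecLin_apply]
      funext i
      simp [Matrix.mulVec, dotProduct, Pi.single_apply]
    have h0 : f (fun i => M i j) = 0 := hW0 _ hcol
    have hdecomp : (fun i => M i j) = ∑ i : Fin n, M i j • (Pi.single i 1 : Fin n → ℝ) := by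
      funext i'
      simp [Finset.sum_apply, Pi.single_apply]
    calc ∑ i, f (Pi.single i 1) * M i j = ∑ i, f (M i j • (Pi.single i 1 : Fin n → ℝ)) := by
          refine Finset.sum_congr rfl fun i _ => ?_
          rw [map_smul, smul_eq_mul, mul_comm]
        _ = f (∑ i : Fin n, M i j • (Pi.single i 1 : Fin n → ℝ)) := (map_sum f _ _).symm
        _ = f (fun i => M i j) := by rw [← hdecomp]
        _ = 0 := h0
end

section
/- Let A ∈ ℝ^{(d+1)×n} be a uniform matrix (no maximal minor vanishes) whose first row is all ones, and let B ∈ ℝ^{n×k} (k = n−d−1) be a Gale dual matrix of A that is dominating. Then for any subset L ⊂ {1,...,n} with 1 ≤ |L| ≤ k, the submatrix B_L of B consisting of the rows indexed by L is not weakly mixed. -/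
/-- Lemma on no weakly mixed row-submatrices: if `A` is uniform
with first row of ones and `B` is a dominating Gale dual of `A`, then for any set
`L` of row indices with `1 ≤ |L| ≤ k`, the submatrix `B_L` is not weakly mixed,
i.e. it is not the case that every column of `B_L` is either zero or contains a
strictly positive and a strictly negative entry. -/
theorem dominating_gale_dual_row_submatrix_not_weakly_mixed
    (d k : ℕ) (A : Matrix (Fin (d + 1)) (Fin (d + k + 1)) ℝ)
    (hA1 : ∀ j, A 0 j = 1)
    (hAunif : ∀ c : Fin (d + 1) → Fin (d + k + 1), Function.Injective c →
      (A.submatrix id c).det ≠ 0)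
    (B : Matrix (Fin (d + k + 1)) (Fin k) ℝ)
    (hAB : A * B = 0) (hBrank : B.rank = k) (hBdom : IsDominating B)
    (L : Finset (Fin (d + k + 1))) (hL1 : 1 ≤ L.card) (hLk : L.card ≤ k) :
    ¬ (∀ j, (∀ i ∈ L, B i j = 0) ∨ ((∃ i ∈ L, 0 < B i j) ∧ ∃ i ∈ L, B i j < 0)) := by
  intro h
  classical
  set Z : Finset (Fin k) := Finset.univ.filter (fun j => ∀ i ∈ L, B i j = 0) with hZdef
  -- Step A: the number of non-zero (hence mixed) columns is < L.card
  have hstepA : Zᶜ.card < L.card := by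
    by_contra hge
    push_neg at hge
    obtain ⟨t, htsub, htcard⟩ := Finset.exists_subset_card_eq hge
    set r : Fin L.card → Fin (d + k + 1) := fun i => L.orderEmbOfFin rfl i with hrdef
    set c : Fin L.card → Fin k := fun i => t.orderEmbOfFin htcard i with hcdef
    refine hBdom L.card hL1 r c (L.orderEmbOfFin rfl).injective
      (t.orderEmbOfFin htcard).injective ?_
    intro jj
    have hct : c jj ∈ t := t.orderEmbOfFin_mem htcard jj
    have hcZ : c jj ∈ Zᶜ := htsub hct
    have hcnotZ : ¬ (∀ i ∈ L, B i (c jj) = 0) := by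
      intro hall
      have : c jj ∈ Z := by
        rw [hZdef]
        exact Finset.mem_filter.mpr ⟨Finset.mem_univ _, hall⟩
      exact (Finset.mem_compl.mp hcZ) this
    rcases h (c jj) with hzero | ⟨⟨i₁, hi₁L, hi₁⟩, ⟨i₂, hi₂L, hi₂⟩⟩
    · exact absurd hzero hcnotZ
    constructor
    · have : i₁ ∈ Set.range (L.orderEmbOfFin rfl) := by
        rw [Finset.range_orderEmbOfFin]; exact hi₁L
      obtain ⟨a, ha⟩ := this
      exact ⟨a, by simpa [Matrix.submatrix, hrdef, ha] using hi₁⟩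
    · have : i₂ ∈ Set.range (L.orderEmbOfFin rfl) := by
        rw [Finset.range_orderEmbOfFin]; exact hi₂L
      obtain ⟨a, ha⟩ := this
      exact ⟨a, by simpa [Matrix.submatrix, hrdef, ha] using hi₂⟩
  have hcardZ : Z.card + Zᶜ.card = k := by
    rw [Finset.card_add_card_compl]; simp
  -- B has injective mulVec
  have hBinj : ∀ v : Fin k → ℝ, B.mulVec v = 0 → v = 0 := by
    have hrn := B.mulVecLin.finrank_range_add_finrank_ker
    have hdr : Module.finrank ℝ (Fin k → ℝ) = k := by
      simp [Module.finrank_fintype_fun_eq_card]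
    rw [hdr] at hrn
    have hr : Module.finrank ℝ (LinearMap.range B.mulVecLin) = k := hBrank
    have hker0 : Module.finrank ℝ (LinearMap.ker B.mulVecLin) = 0 := by omega
    have hker : LinearMap.ker B.mulVecLin = ⊥ := Submodule.finrank_eq_zero.mp hker0
    intro v hv
    have hv' : B.mulVecLin v = 0 := by simpa using hv
    exact (LinearMap.ker_eq_bot.mp hker) (by simpa using hv')
  -- choose S ⊆ Lᶜ with |S| = d+1
  have hLcc : Lᶜ.card = d + k + 1 - L.card := by
    rw [Finset.card_compl]; simp
  have hScard' : d + 1 ≤ Lᶜ.card := by omega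
  obtain ⟨S, hSsub, hScard⟩ := Finset.exists_subset_card_eq hScard'
  set T : Finset (Fin (d + k + 1)) := Lᶜ \ S with hTdef
  have hTcard : T.card = k - L.card := by
    rw [hTdef, Finset.card_sdiff_of_subset hSsub]; omega
  set e : Fin (d + 1) → Fin (d + k + 1) := fun i => S.orderEmbOfFin hScard i with hedef
  have heinj : Function.Injective e := (S.orderEmbOfFin hScard).injective
  have hdet : (A.submatrix id e).det ≠ 0 := hAunif e heinj
  have hSmap : S = Finset.univ.map ⟨e, heinj⟩ := by
    ext j
    simp only [Finset.mem_map, Finset.mem_univ, true_and, Function.Embedding.coeFn_mk]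
    constructor
    · intro hj
      have : j ∈ Set.range (S.orderEmbOfFin hScard) := by
        rw [Finset.range_orderEmbOfFin]; exact hj
      obtain ⟨a, ha⟩ := this
      exact ⟨a, ha⟩
    · rintro ⟨a, rfl⟩; exact S.orderEmbOfFin_mem hScard a
  -- the family of columns of B in Z, restricted to T, is linearly independent
  have hLI : LinearIndependent ℝ
      (fun (j : {j // j ∈ Z}) => fun (i : {i // i ∈ T}) => B i.1 j.1) := by
    rw [Fintype.linearIndependent_iff]
    intro g hg j
    set v : Fin k → ℝ := fun jj => if hj : jj ∈ Z then g ⟨jj, hj⟩ else 0 with hvdef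
    set x : Fin (d + k + 1) → ℝ := B.mulVec v with hxdef
    have hxf : ∀ i, x i = ∑ jz : {j // j ∈ Z}, g jz * B i jz.1 := by
      intro i
      rw [hxdef]
      simp only [Matrix.mulVec, dotProduct]
      rw [← Finset.sum_subset (Finset.subset_univ Z) (by
        intro jj _ hjj
        simp only [hvdef]
        rw [dif_neg hjj, mul_zero])]
      rw [Finset.univ_eq_attach, ← Finset.sum_attach Z (fun jj => B i jj * v jj)]
      refine Finset.sum_congr rfl ?_
      intro jz _
      simp [hvdef, jz.2, mul_comm]
    have hxL : ∀ i ∈ L, x i = 0 := by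
      intro i hi
      rw [hxf]
      refine Finset.sum_eq_zero ?_
      intro jz _
      have hz : jz.1 ∈ Z := jz.2
      simp only [hZdef, Finset.mem_filter] at hz
      rw [hz.2 i hi, mul_zero]
    have hxT : ∀ i, i ∈ T → x i = 0 := by
      intro i hi
      have h0 := congrFun hg ⟨i, hi⟩
      simp only [Finset.sum_apply, Pi.smul_apply, smul_eq_mul, Pi.zero_apply] at h0
      rw [hxf]; exact h0
    have hAx : A.mulVec x = 0 := by
      rw [hxdef, Matrix.mulVec_mulVec, hAB, Matrix.zero_mulVec]
    have hMy : (A.submatrix id e).mulVec (fun t => x (e t)) = 0 := by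
      funext rr
      have h0 : (A.mulVec x) rr = 0 := congrFun hAx rr
      simp only [Matrix.mulVec, dotProduct, Pi.zero_apply] at h0 ⊢
      have hsplit : ∑ j ∈ S, A rr j * x j = ∑ j, A rr j * x j := by
        apply Finset.sum_subset (Finset.subset_univ S)
        intro jj _ hjS
        have : x jj = 0 := by
          by_cases hjL : jj ∈ L
          · exact hxL jj hjL
          · exact hxT jj (by simp [hTdef, hjL, hjS])
        rw [this, mul_zero]
      calc ∑ t, (A.submatrix id e) rr t * x (e t)
          = ∑ j ∈ S, A rr j * x j := by rw [hSmap, Finset.sum_map]; rfl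
        _ = ∑ j, A rr j * x j := hsplit
        _ = 0 := h0
    have hy : (fun t => x (e t)) = 0 := Matrix.eq_zero_of_mulVec_eq_zero hdet hMy
    have hxS : ∀ i ∈ S, x i = 0 := by
      intro i hi
      have : i ∈ Set.range (S.orderEmbOfFin hScard) := by
        rw [Finset.range_orderEmbOfFin]; exact hi
      obtain ⟨a, ha⟩ := this
      have := congrFun hy a
      simpa [hedef, ha] using this
    have hx0 : x = 0 := by
      funext i
      by_cases hiL : i ∈ L
      · exact hxL i hiL
      · by_cases hiS : i ∈ S
        · exact hxS i hiS
        · exact hxT i (by simp [hTdef, hiL, hiS])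
    have hv0 : v = 0 := hBinj v (by rw [← hxdef]; exact hx0)
    have := congrFun hv0 j.1
    simpa [hvdef, j.2] using this
  -- cardinality contradiction
  have hcard := hLI.fintype_card_le_finrank
  rw [Module.finrank_fintype_fun_eq_card] at hcard
  simp only [Fintype.card_coe] at hcard
  omega
end

section
/- Let C ∈ ℝ^{d×n} have maximal rank d with 0 ∈ 𝒞° (the open positive cone of its columns). Let D̃ ∈ ℝ^{n×k} have maximal rank k, satisfy C·D̃ = 0, and suppose the origin belongs to the open positive cone generated by the rows of D̃. Then there exists a positive vector D_0 ∈ ker(C) ∩ ℝ_{>0}^n not in the column span of D̃, and the matrix D ∈ ℝ^{n×(k+1)} obtained by prepending D_0 as a first column to D̃ is Gale dual to C and satisfies (1,0,...,0) ∈ ℝ_{>0}P_1 + ... + ℝ_{>0}P_n, where P_i are the rows of D. -/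
open Matrix


/-- adding a positive vector to get a bounded Gale dual: if `C` has
maximal rank `d`, `0 ∈ 𝒞°`, and `D̃` is a rank-`k` matrix with `C·D̃ = 0` whose
rows positively span the origin, then there is a positive vector `D₀ ∈ ker C` not
in the column span of `D̃` such that prepending it to `D̃` yields a Gale dual
matrix `D` of `C` with `(1,0,…,0)` in the open cone generated by its rows. -/
theorem prepend_positive_vector_gale_dual
    (d k : ℕ) (C : Matrix (Fin d) (Fin (d + k + 1)) ℝ)
    (hrank : C.rank = d)
    (hcone : ∃ t : Fin (d + k + 1) → ℝ, (∀ j, 0 < t j) ∧ ∀ i, ∑ j, t j * C i j = 0)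
    (Dt : Matrix (Fin (d + k + 1)) (Fin k) ℝ)
    (hCDt : C * Dt = 0) (hDtrank : Dt.rank = k)
    (hrows : ∃ t : Fin (d + k + 1) → ℝ, (∀ i, 0 < t i) ∧
      (0 : Fin k → ℝ) = ∑ i, t i • Dt i) :
    ∃ D0 : Fin (d + k + 1) → ℝ,
      (∀ i, 0 < D0 i) ∧ C.mulVec D0 = 0 ∧
      D0 ∉ Submodule.span ℝ (Set.range fun j => (fun i => Dt i j)) ∧
      (let D : Matrix (Fin (d + k + 1)) (Fin (k + 1)) ℝ :=
        Matrix.of fun i => Fin.cons (D0 i) (Dt i)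
      C * D = 0 ∧ D.rank = k + 1 ∧
        ∃ t : Fin (d + k + 1) → ℝ, (∀ i, 0 < t i) ∧
          (Pi.single (0 : Fin (k + 1)) (1 : ℝ)) = ∑ i, t i • D i) := by
  obtain ⟨t0, ht0pos, ht0⟩ := hcone
  obtain ⟨s, hspos, hs⟩ := hrows
  -- rows condition componentwise
  have hsj : ∀ j, ∑ i, s i * Dt i j = 0 := by
    intro j
    have := congrFun hs j
    simpa [Finset.sum_apply] using this.symm
  have hmul : C.mulVec t0 = 0 := by
    funext i
    simpa [Matrix.mulVec, dotProduct, mul_comm] using ht0 i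
  -- D0 not in column span of Dt
  have hc : 0 < ∑ i, s i * t0 i :=
    Finset.sum_pos (fun i _ => mul_pos (hspos i) (ht0pos i)) ⟨0, Finset.mem_univ _⟩
  have hnotmem : t0 ∉ Submodule.span ℝ (Set.range fun j => (fun i => Dt i j)) := by
    intro hmem
    set φ : (Fin (d + k + 1) → ℝ) →ₗ[ℝ] ℝ :=
      ∑ i, s i • (LinearMap.proj i : (Fin (d + k + 1) → ℝ) →ₗ[ℝ] ℝ) with hφ
    have hφapp : ∀ v, φ v = ∑ i, s i * v i := by
      intro v; simp [hφ, LinearMap.sum_apply]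
    have hsub : Submodule.span ℝ (Set.range fun j => (fun i => Dt i j)) ≤ LinearMap.ker φ := by
      rw [Submodule.span_le]
      rintro _ ⟨j, rfl⟩
      simp [LinearMap.mem_ker, hφapp, hsj j]
    have := hsub hmem
    rw [LinearMap.mem_ker, hφapp] at this
    exact hc.ne' this
  refine ⟨t0, ht0pos, hmul, hnotmem, ?_, ?_, ?_⟩
  · -- C * D = 0
    ext i j
    refine Fin.cases ?_ ?_ j
    · simpa [Matrix.mul_apply, Matrix.mulVec, dotProduct] using congrFun hmul i
    · intro j'
      have := congrFun (congrFun hCDt i) j'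
      simpa [Matrix.mul_apply] using this
  · -- rank
    have hcols : LinearIndependent ℝ (fun j => (fun i => Dt i j)) := by
      rw [linearIndependent_iff_card_eq_finrank_span]
      have : (Set.range fun j => (fun i => Dt i j)) = Set.range Dt.col := by
        rfl
      rw [this, Set.finrank, ← Matrix.rank_eq_finrank_span_cols, hDtrank, Fintype.card_fin]
    have hli : LinearIndependent ℝ (Fin.cons t0 (fun j => (fun i => Dt i j)) :
        Fin (k+1) → (Fin (d + k + 1) → ℝ)) :=
      hcols.fin_cons hnotmem
    have hcolD : (Matrix.of fun i => Fin.cons (t0 i) (Dt i) :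
        Matrix (Fin (d + k + 1)) (Fin (k + 1)) ℝ)ᵀ
        = Fin.cons t0 (fun j => (fun i => Dt i j)) := by
      funext j i
      refine Fin.cases ?_ ?_ j <;> simp [Matrix.transpose_apply]
    rw [Matrix.rank_eq_finrank_span_cols, Matrix.col, hcolD, finrank_span_eq_card hli, Fintype.card_fin]
  · -- positive combination
    set c := ∑ i, s i * t0 i with hcdef
    refine ⟨fun i => s i / c, fun i => div_pos (hspos i) hc, ?_⟩
    funext j
    rw [Finset.sum_apply]
    refine Fin.cases ?_ ?_ j
    · simp only [Pi.single_eq_same, Pi.smul_apply, Matrix.of_apply, Fin.cons_zero, smul_eq_mul,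
        div_mul_eq_mul_div, ← Finset.sum_div]
      rw [eq_comm, div_eq_one_iff_eq hc.ne']
    · intro j'
      rw [Pi.single_eq_of_ne (Fin.succ_ne_zero j') 1]
      simp only [Pi.smul_apply, Matrix.of_apply, Fin.cons_succ, smul_eq_mul,
        div_mul_eq_mul_div, ← Finset.sum_div]
      rw [hsj j', zero_div]
end

section
/- Let 𝒜 ⊂ ℝ^d with associated matrix A ∈ ℝ^{(d+1)×n} (row of ones on top) and suppose A admits a dominating Gale dual matrix B ∈ ℝ^{n×k}. Then there exists a dominating Gale dual matrix B' ∈ ℝ^{n×k} of A such that every column of B' is a circuit of ker(A). -/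
/-- A circuit of `ker A`: a nonzero kernel vector with inclusion-minimal support. -/
def IsCircuitOfKer {m n : ℕ} (A : Matrix (Fin m) (Fin n) ℝ) (v : Fin n → ℝ) : Prop :=
  v ≠ 0 ∧ A.mulVec v = 0 ∧
    ∀ w : Fin n → ℝ, w ≠ 0 → A.mulVec w = 0 →
      {i | w i ≠ 0} ⊆ {i | v i ≠ 0} → {i | w i ≠ 0} = {i | v i ≠ 0}

noncomputable def suppF {n : ℕ} (v : Fin n → ℝ) : Finset (Fin n) :=
  Finset.univ.filter (fun i => v i ≠ 0)

lemma mem_suppF {n : ℕ} {v : Fin n → ℝ} {i : Fin n} : i ∈ suppF v ↔ v i ≠ 0 := by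
  simp [suppF]

lemma suppF_coe {n : ℕ} (v : Fin n → ℝ) : {i | v i ≠ 0} = (suppF v : Set (Fin n)) := by
  ext i; simp [suppF]

lemma sign_trans {a b c : ℝ} (h1 : 0 < a * b) (h2 : 0 < b * c) : 0 < a * c := by
  have hb : b ≠ 0 := by rintro rfl; simp at h1
  have h3 : 0 < (a * c) * (b * b) := by nlinarith [mul_pos h1 h2]
  by_contra h
  push_neg at h
  nlinarith [mul_self_nonneg b]

lemma mixed_of_ker {d n : ℕ} (A : Matrix (Fin (d+1)) (Fin n) ℝ)
    (hA1 : ∀ j, A 0 j = 1) {v : Fin n → ℝ} (hv : v ≠ 0) (hker : A.mulVec v = 0) :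
    IsMixedVec v := by
  have hsum : ∑ j, v j = 0 := by
    have := congrFun hker 0
    simpa [Matrix.mulVec, dotProduct, hA1] using this
  constructor
  · by_contra h
    push_neg at h
    have hz := (Finset.sum_eq_zero_iff_of_nonpos (fun j _ => h j)).mp hsum
    exact hv (funext fun i => hz i (Finset.mem_univ i))
  · by_contra h
    push_neg at h
    have hz := (Finset.sum_eq_zero_iff_of_nonneg (fun j _ => h j)).mp hsum
    exact hv (funext fun i => hz i (Finset.mem_univ i))

lemma exists_conformal_circuit {m n : ℕ} (A : Matrix (Fin m) (Fin n) ℝ) :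
    ∀ N : ℕ, ∀ v : Fin n → ℝ, (suppF v).card ≤ N → v ≠ 0 → A.mulVec v = 0 →
      ∃ s : Fin n → ℝ, IsCircuitOfKer A s ∧ ∀ i, s i ≠ 0 → 0 < s i * v i := by
  intro N
  induction N with
  | zero =>
    intro v hcard hv _
    exfalso
    obtain ⟨i, hi⟩ := Function.ne_iff.mp hv
    have : i ∈ suppF v := mem_suppF.mpr hi
    have := Finset.card_pos.mpr ⟨i, this⟩
    omega
  | succ N ih =>
    intro v hcard hv hker
    classical
    -- family of supports of nonzero kernel vectors inside supp v
    set 𝒞 : Finset (Finset (Fin n)) :=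
      ((suppF v).powerset).filter
        (fun T => ∃ w : Fin n → ℝ, w ≠ 0 ∧ A.mulVec w = 0 ∧ suppF w = T) with h𝒞
    have hvmem : suppF v ∈ 𝒞 := by
      simp only [h𝒞, Finset.mem_filter, Finset.mem_powerset]
      exact ⟨le_refl _, v, hv, hker, rfl⟩
    obtain ⟨T, hT, hTmin'⟩ := Finset.exists_minimal (s := 𝒞) ⟨_, hvmem⟩
    have hTmin : ∀ x ∈ 𝒞, ¬ x < T := fun x hx hlt => hlt.not_ge (hTmin' hx hlt.le)
    simp only [h𝒞, Finset.mem_filter, Finset.mem_powerset] at hT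
    obtain ⟨hTsub, w, hw0, hwker, hwT⟩ := hT
    have hwsub : suppF w ⊆ suppF v := hwT ▸ hTsub
    -- w is a circuit
    have hwcirc : IsCircuitOfKer A w := by
      refine ⟨hw0, hwker, fun u hu0 huker husub => ?_⟩
      rw [suppF_coe, suppF_coe] at husub ⊢
      norm_cast at husub ⊢
      have humem : suppF u ∈ 𝒞 := by
        simp only [h𝒞, Finset.mem_filter, Finset.mem_powerset]
        exact ⟨husub.trans (hwT ▸ hTsub), u, hu0, huker, rfl⟩
      have hnlt := hTmin _ humem
      rw [← hwT] at hnlt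
      exact (eq_or_lt_of_le (Finset.le_iff_subset.mpr husub)).resolve_right hnlt
    -- sign analysis
    set P : Finset (Fin n) := (suppF w).filter (fun i => 0 < v i * w i) with hP
    rcases P.eq_empty_or_nonempty with hPe | hPne
    · -- all signs opposite: -w is a conformal circuit
      refine ⟨-w, ?_, ?_⟩
      · obtain ⟨hw0', hwker', hwmin'⟩ := hwcirc
        refine ⟨neg_ne_zero.mpr hw0', by rw [Matrix.mulVec_neg, hwker', neg_zero], ?_⟩
        intro u hu0 huker husub
        have hset : {i | (-w) i ≠ 0} = {i | w i ≠ 0} := by ext i; simp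
        rw [hset] at husub ⊢
        exact hwmin' u hu0 huker husub
      · intro i hsi
        have hwi : w i ≠ 0 := by simpa using hsi
        have hvi : v i ≠ 0 := mem_suppF.mp (hwsub (mem_suppF.mpr hwi))
        have hnot : ¬ (0 < v i * w i) := by
          intro hpos
          have : i ∈ P := by rw [hP]; exact Finset.mem_filter.mpr ⟨mem_suppF.mpr hwi, hpos⟩
          rw [hPe] at this; exact absurd this (Finset.notMem_empty i)
        have hlt : v i * w i < 0 :=
          lt_of_le_of_ne (le_of_not_gt hnot) (mul_ne_zero hvi hwi)
        have : (-w) i * v i = -(v i * w i) := by simp; ring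
        rw [this]; linarith
    · obtain ⟨i0, hi0P, hi0min⟩ := P.exists_min_image (fun i => v i / w i) hPne
      have hi0P' : i0 ∈ Finset.filter (fun i => 0 < v i * w i) (suppF w) := by
        rwa [hP] at hi0P
      have hi0w : w i0 ≠ 0 := mem_suppF.mp (Finset.mem_filter.mp hi0P').1
      have hi0pos : 0 < v i0 * w i0 := (Finset.mem_filter.mp hi0P').2
      set t0 : ℝ := v i0 / w i0 with ht0def
      have ht0 : 0 < t0 := by
        have h : t0 = (v i0 * w i0) / (w i0 * w i0) := by
          rw [ht0def, mul_div_mul_right _ _ hi0w]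
        rw [h]; exact div_pos hi0pos (mul_self_pos.mpr hi0w)
      set u : Fin n → ℝ := fun i => v i - t0 * w i with hu
      have huker : A.mulVec u = 0 := by
        have h : u = v - t0 • w := by funext i; simp [hu, smul_eq_mul]
        rw [h, Matrix.mulVec_sub, Matrix.mulVec_smul, hker, hwker, smul_zero, sub_zero]
      have hui0 : u i0 = 0 := by
        simp only [hu, ht0def]
        rw [div_mul_cancel₀ _ hi0w]; ring
      have husub : ∀ i, v i = 0 → u i = 0 := by
        intro i hvi
        have hwi : w i = 0 := by
          by_contra hwi
          exact (mem_suppF.mp (hwsub (mem_suppF.mpr hwi))) hvi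
        simp [hu, hvi, hwi]
      have hconf_u : ∀ i, u i ≠ 0 → 0 < u i * v i := by
        intro i hui
        have hvi : v i ≠ 0 := fun h => hui (husub i h)
        by_cases hwi : w i = 0
        · have h : u i = v i := by simp [hu, hwi]
          rw [h]; exact mul_self_pos.mpr hvi
        · by_cases hiP : i ∈ P
          · have hmin := hi0min i hiP
            have hiP' : i ∈ Finset.filter (fun i => 0 < v i * w i) (suppF w) := by
              rwa [hP] at hiP
            have hprod : 0 < v i * w i := (Finset.mem_filter.mp hiP').2
            have huw : 0 ≤ u i * w i := by
              have h : u i * w i = (w i * w i) * (v i / w i - t0) := by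
                simp only [hu]
                field_simp
              rw [h]
              exact mul_nonneg (mul_self_nonneg _) (by linarith)
            have huw' : 0 < u i * w i :=
              lt_of_le_of_ne huw (fun h => (mul_ne_zero hui hwi) h.symm)
            exact sign_trans huw' (by rw [mul_comm]; exact hprod)
          · have hle : v i * w i < 0 := by
              have hn : ¬ 0 < v i * w i := fun h =>
                hiP (by rw [hP]; exact Finset.mem_filter.mpr ⟨mem_suppF.mpr hwi, h⟩)
              exact lt_of_le_of_ne (le_of_not_gt hn) (mul_ne_zero hvi hwi)
            have h : u i * v i = v i * v i - t0 * (w i * v i) := by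
              simp only [hu]; ring
            rw [h]
            nlinarith [mul_self_pos.mpr hvi]
      by_cases hu0 : u = 0
      · refine ⟨w, hwcirc, fun i hwi => ?_⟩
        have hvi : v i = t0 * w i := by
          have h := congrFun hu0 i
          simp only [hu, Pi.zero_apply] at h
          linarith
        rw [hvi]
        nlinarith [mul_self_pos.mpr hwi]
      · have hcard_u : (suppF u).card ≤ N := by
          have hsub' : suppF u ⊆ (suppF v).erase i0 := by
            intro i hi
            have hui : u i ≠ 0 := mem_suppF.mp hi
            refine Finset.mem_erase.mpr ⟨?_, mem_suppF.mpr (fun h => hui (husub i h))⟩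
            rintro rfl; exact hui hui0
          have h1 := Finset.card_le_card hsub'
          have hvi0 : i0 ∈ suppF v := hwsub (mem_suppF.mpr hi0w)
          have h2 := Finset.card_erase_of_mem hvi0
          have h3 := Finset.card_pos.mpr ⟨i0, hvi0⟩
          omega
        obtain ⟨s, hscirc, hsconf⟩ := ih u hcard_u hu0 huker
        refine ⟨s, hscirc, fun i hsi => ?_⟩
        have h1 := hsconf i hsi
        have hui : u i ≠ 0 := by
          rintro h; rw [h, mul_zero] at h1; exact lt_irrefl _ h1
        exact sign_trans h1 (hconf_u i hui)

lemma pos_of_mul_pos_left' {a b : ℝ} (h : 0 < a * b) (ha : 0 < a) : 0 < b := by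
  rcases mul_pos_iff.mp h with ⟨_, h2⟩ | ⟨h1, _⟩
  · exact h2
  · linarith

lemma neg_of_mul_neg_left' {a b : ℝ} (h : a * b < 0) (ha : 0 < a) : b < 0 := by
  rcases mul_neg_iff.mp h with ⟨_, h2⟩ | ⟨h1, _⟩
  · exact h2
  · linarith

lemma neg_of_mul_pos_neg' {a b : ℝ} (h : 0 < a * b) (ha : a < 0) : b < 0 := by
  rcases mul_pos_iff.mp h with ⟨h1, _⟩ | ⟨_, h2⟩
  · linarith
  · exact h2

lemma pos_of_mul_neg_neg' {a b : ℝ} (h : a * b < 0) (ha : a < 0) : 0 < b := by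
  rcases mul_neg_iff.mp h with ⟨h1, _⟩ | ⟨_, h2⟩
  · linarith
  · exact h2

lemma linearIndependent_of_mixed_dominating {n k : ℕ} (M : Matrix (Fin n) (Fin k) ℝ)
    (hmix : IsMixedMat M) (hdom : IsDominating M) :
    LinearIndependent ℝ (fun j : Fin k => (fun i => M i j : Fin n → ℝ)) := by
  classical
  by_contra hdep
  rw [Fintype.not_linearIndependent_iff] at hdep
  obtain ⟨g, hgsum, j0, hj0⟩ := hdep
  set N : Matrix (Fin n) (Fin k) ℝ := fun i j => g j * M i j with hN
  have hrow : ∀ i, ∑ j, N i j = 0 := by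
    intro i
    have := congrFun hgsum i
    simpa [hN, Finset.sum_apply] using this
  have hNg : ∀ i j, N i j ≠ 0 → g j ≠ 0 := by
    intro i j h hg; exact h (by simp [hN, hg])
  -- columns with nonzero coefficient are mixed in N
  have hNpos : ∀ j, g j ≠ 0 → ∃ i, 0 < N i j := by
    intro j hj
    obtain ⟨⟨i1, h1⟩, ⟨i2, h2⟩⟩ := hmix j
    rcases lt_or_gt_of_ne hj with hneg | hpos
    · exact ⟨i2, by simp only [hN]; exact mul_pos_of_neg_of_neg hneg h2⟩
    · exact ⟨i1, by simp only [hN]; exact mul_pos hpos h1⟩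
  have hNneg : ∀ i j, 0 < N i j → ∃ j', N i j' < 0 := by
    intro i j hij
    by_contra h
    push_neg at h
    have hz := (Finset.sum_eq_zero_iff_of_nonneg (fun j' _ => h j')).mp (hrow i)
    exact absurd (hz j (Finset.mem_univ j)) (ne_of_gt hij)
  -- the walk
  have hstep : ∀ j : {j : Fin k // g j ≠ 0},
      ∃ p : (Fin n) × {j : Fin k // g j ≠ 0}, 0 < N p.1 j ∧ N p.1 p.2 < 0 := by
    intro j
    obtain ⟨i, hi⟩ := hNpos j j.2
    obtain ⟨j', hj'⟩ := hNneg i j hi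
    exact ⟨⟨i, ⟨j', hNg i j' (ne_of_lt hj')⟩⟩, hi, hj'⟩
  choose step hstep1 hstep2 using hstep
  let nextS : {j : Fin k // g j ≠ 0} → {j : Fin k // g j ≠ 0} := fun j => (step j).2
  let row : {j : Fin k // g j ≠ 0} → Fin n := fun j => (step j).1
  let seq : ℕ → {j : Fin k // g j ≠ 0} := fun t => nextS^[t] ⟨j0, hj0⟩
  have hseqsucc : ∀ t, seq (t + 1) = nextS (seq t) := by
    intro t; simp only [seq, Function.iterate_succ_apply']
  have hpos : ∀ t, 0 < N (row (seq t)) (seq t) := fun t => hstep1 (seq t)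
  have hneg : ∀ t, N (row (seq t)) (seq (t + 1)) < 0 := by
    intro t; rw [hseqsucc t]; exact hstep2 (seq t)
  -- pigeonhole: a repeat exists
  have hrep : ∃ t, ∃ s, s < t ∧ seq s = seq t := by
    obtain ⟨a, b, hne, hab⟩ := Finite.exists_ne_map_eq_of_infinite seq
    rcases hne.lt_or_gt with h | h
    · exact ⟨b, a, h, hab⟩
    · exact ⟨a, b, h, hab.symm⟩
  set t0 := Nat.find hrep with ht0
  obtain ⟨s0, hs0, hseq0⟩ := Nat.find_spec hrep
  rw [← ht0] at hs0 hseq0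
  have hinjOn : ∀ a b, a < b → b < t0 → seq a ≠ seq b := by
    intro a b hab hb heq
    exact Nat.find_min hrep hb ⟨a, hab, heq⟩
  set f : ℕ → Fin n := fun t => row (seq t) with hf
  set C : Finset (Fin k) := (Finset.Ico s0 t0).image (fun u => (seq u).1) with hC
  set R : Finset (Fin n) := (Finset.Ico s0 t0).image f with hR
  have hCcard : C.card = t0 - s0 := by
    rw [hC, Finset.card_image_of_injOn, Nat.card_Ico]
    intro a ha b hb hab
    rw [Finset.coe_Ico, Set.mem_Ico] at ha hb
    by_contra hne
    have hab' : seq a = seq b := Subtype.ext hab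
    rcases Nat.lt_or_ge a b with h | h
    · exact hinjOn a b h hb.2 hab'
    · exact hinjOn b a (lt_of_le_of_ne h (Ne.symm hne)) ha.2 hab'.symm
  have hRcard : R.card ≤ t0 - s0 := by
    rw [hR]
    exact le_trans Finset.card_image_le (by rw [Nat.card_Ico])
  have hmixC : ∀ j ∈ C, (∃ i ∈ R, 0 < N i j) ∧ (∃ i ∈ R, N i j < 0) ∧ g j ≠ 0 := by
    intro j hj
    rw [hC, Finset.mem_image] at hj
    obtain ⟨u, hu, huj⟩ := hj
    rw [Finset.mem_Ico] at hu
    refine ⟨⟨f u, ?_, ?_⟩, ?_, ?_⟩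
    · rw [hR]; exact Finset.mem_image_of_mem f (Finset.mem_Ico.mpr hu)
    · rw [← huj]; exact hpos u
    · rcases Nat.eq_or_lt_of_le hu.1 with heq | hlt
      · refine ⟨f (t0 - 1), ?_, ?_⟩
        · rw [hR]
          exact Finset.mem_image_of_mem f (Finset.mem_Ico.mpr ⟨by omega, by omega⟩)
        · have h1 : t0 - 1 + 1 = t0 := by omega
          have h2 := hneg (t0 - 1)
          rw [h1] at h2
          have h3 : j = ((seq t0 : {j : Fin k // g j ≠ 0}) : Fin k) := by
            rw [← hseq0]
            rw [← heq] at huj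
            exact huj.symm
          rw [h3]
          exact h2
      · refine ⟨f (u - 1), ?_, ?_⟩
        · rw [hR]
          exact Finset.mem_image_of_mem f (Finset.mem_Ico.mpr ⟨by omega, by omega⟩)
        · have h1 : u - 1 + 1 = u := by omega
          have h2 := hneg (u - 1)
          rw [h1] at h2
          rw [← huj]
          exact h2
    · rw [← huj]; exact (seq u).2
  have hmlb : 0 < R.card := by
    refine Finset.card_pos.mpr ⟨f s0, ?_⟩
    rw [hR]
    exact Finset.mem_image_of_mem f (Finset.mem_Ico.mpr ⟨le_refl _, hs0⟩)
  obtain ⟨C', hC'sub, hC'card⟩ :=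
    Finset.exists_subset_card_eq (s := C) (n := R.card) (by rw [hCcard]; exact hRcard)
  set m := R.card with hm
  let er := R.equivFin
  let ec := C'.equivFin
  let r : Fin m → Fin n := fun a => (er.symm a : Fin n)
  let c : Fin m → Fin k := fun a => (ec.symm (Fin.cast hC'card.symm a) : Fin k)
  have hrinj : Function.Injective r := by
    intro a b h
    exact er.symm.injective (Subtype.ext h)
  have hcinj : Function.Injective c := by
    intro a b h
    have := ec.symm.injective (Subtype.ext h)
    exact Fin.cast_injective _ this
  refine hdom m hmlb r c hrinj hcinj ?_
  intro a
  have hca : (c a) ∈ C := hC'sub (ec.symm (Fin.cast hC'card.symm a)).2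
  obtain ⟨⟨i1, hi1R, hi1⟩, ⟨i2, hi2R, hi2⟩, hgca⟩ := hmixC _ hca
  have hb1 : ∃ b : Fin m, r b = i1 := ⟨er ⟨i1, hi1R⟩, by simp [r, er]⟩
  have hb2 : ∃ b : Fin m, r b = i2 := ⟨er ⟨i2, hi2R⟩, by simp [r, er]⟩
  obtain ⟨b1, hb1⟩ := hb1
  obtain ⟨b2, hb2⟩ := hb2
  rw [hN] at hi1 hi2
  simp only [] at hi1 hi2
  rcases lt_or_gt_of_ne hgca with hgneg | hgpos
  · refine ⟨⟨b2, ?_⟩, ⟨b1, ?_⟩⟩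
    · simpa [Matrix.submatrix_apply, hb2] using pos_of_mul_neg_neg' hi2 hgneg
    · simpa [Matrix.submatrix_apply, hb1] using neg_of_mul_pos_neg' hi1 hgneg
  · refine ⟨⟨b1, ?_⟩, ⟨b2, ?_⟩⟩
    · simpa [Matrix.submatrix_apply, hb1] using pos_of_mul_pos_left' hi1 hgpos
    · simpa [Matrix.submatrix_apply, hb2] using neg_of_mul_neg_left' hi2 hgpos

/-- if `A` (with first row of ones) admits a dominating Gale dual
matrix `B`, then it admits a dominating Gale dual matrix `B'` each of whose columns
is a circuit of `ker A`. -/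
theorem exists_dominating_gale_dual_of_circuits
    (d k : ℕ) (A : Matrix (Fin (d + 1)) (Fin (d + k + 1)) ℝ)
    (hA1 : ∀ j, A 0 j = 1) (hArank : A.rank = d + 1)
    (B : Matrix (Fin (d + k + 1)) (Fin k) ℝ)
    (hAB : A * B = 0) (hBrank : B.rank = k) (hBdom : IsDominating B) :
    ∃ B' : Matrix (Fin (d + k + 1)) (Fin k) ℝ,
      A * B' = 0 ∧ B'.rank = k ∧ IsDominating B' ∧
      ∀ j, IsCircuitOfKer A (fun i => B' i j) := by
  classical
  -- columns of B are nonzero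
  have hBind : LinearIndependent ℝ (fun j : Fin k => B.transpose j) := by
    rw [linearIndependent_iff_card_eq_finrank_span, Fintype.card_fin]
    have h := Matrix.rank_eq_finrank_span_cols B
    rw [hBrank] at h
    exact h
  have hcol0 : ∀ j, (fun i => B i j) ≠ 0 := by
    intro j h
    apply hBind.ne_zero j
    funext i
    exact congrFun h i
  have hkerB : ∀ j, A.mulVec (fun i => B i j) = 0 := by
    intro j
    funext i0
    have h := congrFun (congrFun hAB i0) j
    simpa [Matrix.mul_apply, Matrix.mulVec, dotProduct] using h
  have H : ∀ j : Fin k, ∃ s : Fin (d + k + 1) → ℝ,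
      IsCircuitOfKer A s ∧ ∀ i, s i ≠ 0 → 0 < s i * B i j := fun j =>
    exists_conformal_circuit A ((suppF (fun i => B i j)).card) _ le_rfl (hcol0 j) (hkerB j)
  choose s hcirc hconf using H
  refine ⟨fun i j => s j i, ?_, ?_, ?_, ?_⟩
  · -- A * B' = 0
    ext i0 j
    have h := congrFun ((hcirc j).2.1) i0
    exact (Matrix.mul_apply (M := A)
      (N := ((fun i j => s j i) : Matrix (Fin (d + k + 1)) (Fin k) ℝ))).trans
      (by simpa [Matrix.mulVec, dotProduct] using h)
  · -- rank
    have hdomB' : IsDominating (fun i j => s j i) := by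
      intro m' hm' r c hr hc hmix'
      refine hBdom m' hm' r c hr hc ?_
      intro j
      obtain ⟨⟨b1, h1⟩, ⟨b2, h2⟩⟩ := hmix' j
      simp only [Matrix.submatrix_apply] at h1 h2
      refine ⟨⟨b1, ?_⟩, ⟨b2, ?_⟩⟩
      · simp only [Matrix.submatrix_apply]
        exact pos_of_mul_pos_left' (hconf (c j) (r b1) (ne_of_gt h1)) h1
      · simp only [Matrix.submatrix_apply]
        exact neg_of_mul_pos_neg' (hconf (c j) (r b2) (ne_of_lt h2)) h2
    have hmixB' : IsMixedMat (fun i j => s j i) := by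
      intro j
      exact mixed_of_ker A hA1 ((hcirc j).1) ((hcirc j).2.1)
    have hind := linearIndependent_of_mixed_dominating _ hmixB' hdomB'
    have hind' : LinearIndependent ℝ (Matrix.transpose ((fun i j => s j i) :
        Matrix (Fin (d + k + 1)) (Fin k) ℝ)) := hind
    have hr := LinearIndependent.rank_matrix
      (M := Matrix.transpose ((fun i j => s j i) : Matrix (Fin (d + k + 1)) (Fin k) ℝ)) hind'
    rw [Fintype.card_fin] at hr
    exact (Matrix.rank_transpose
      ((fun i j => s j i) : Matrix (Fin (d + k + 1)) (Fin k) ℝ)).symm.trans hr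
  · -- dominating (same as above)
    intro m' hm' r c hr hc hmix'
    refine hBdom m' hm' r c hr hc ?_
    intro j
    obtain ⟨⟨b1, h1⟩, ⟨b2, h2⟩⟩ := hmix' j
    simp only [Matrix.submatrix_apply] at h1 h2
    refine ⟨⟨b1, ?_⟩, ⟨b2, ?_⟩⟩
    · simp only [Matrix.submatrix_apply]
      exact pos_of_mul_pos_left' (hconf (c j) (r b1) (ne_of_gt h1)) h1
    · simp only [Matrix.submatrix_apply]
      exact neg_of_mul_pos_neg' (hconf (c j) (r b2) (ne_of_lt h2)) h2
  · intro j
    exact hcirc j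
end

section
/- Let B ∈ ℤ^{n×k} be a matrix with integer entries whose columns B_1,...,B_k form a ℤ-basis of ker(A) ∩ ℤ^n for an integer matrix A ∈ ℤ^{(d+1)×n}, and let ε ∈ ℤ^n. Suppose y ∈ ℝ^{k+1} satisfies (−1)^{ε_i}⟨P_i, y⟩ > 0 for all i and ∏_{i=1}^n ⟨P_i,y⟩^{b_{ij}} = 1 for all j. Then Σ_{i=1}^n ε_i b_i ≡ 0 (mod 2) for every b ∈ ker(A) ∩ ℤ^n; equivalently, the reduction [ε]_2 lies in the left kernel of [B]_2 over ℤ/2ℤ. -/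
/-!
Every integer kernel vector `b` of `A` is an integer combination of the columns of `B`, so the
Gale equations give `∏ i, ⟨P_i, y⟩ ^ b i = 1`. Writing `⟨P_i, y⟩ = (-1) ^ ε i * |⟨P_i, y⟩|`, the
left side equals `(-1) ^ (∑ i, ε i * b i)` times a positive number, which forces the exponent to
be even.
-/

open Finset

theorem zpow_sum₀ {M₀ ι : Type*} [CommGroupWithZero M₀] {a : M₀} (ha : a ≠ 0) (s : Finset ι)
    (f : ι → ℤ) : a ^ (∑ i ∈ s, f i) = ∏ i ∈ s, a ^ f i := by
  induction s using Finset.cons_induction with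
  | empty => simp
  | cons i s hi ih => rw [sum_cons, prod_cons, zpow_add₀ ha, ih]

theorem prod_zpow_sum_mul_eq_one {M₀ ι κ : Type*} [CommGroupWithZero M₀] [Fintype ι]
    [Fintype κ] {x : ι → M₀} (hx : ∀ i, x i ≠ 0) {B : ι → κ → ℤ}
    (hB : ∀ j, ∏ i, x i ^ B i j = 1) (c : κ → ℤ) :
    ∏ i, x i ^ (∑ j, c j * B i j) = 1 :=
  calc ∏ i, x i ^ (∑ j, c j * B i j)
      = ∏ i, ∏ j, (x i ^ B i j) ^ c j := by
        refine prod_congr rfl fun i _ => ?_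
        simp only [zpow_sum₀ (hx i), ← zpow_mul, mul_comm]
    _ = ∏ j, (∏ i, x i ^ B i j) ^ c j := by
        rw [prod_comm]
        exact prod_congr rfl fun j _ => prod_zpow _ _ _
    _ = 1 := by simp only [hB, one_zpow, prod_const_one]

theorem even_sum_mul_of_prod_zpow_eq_one {K ι : Type*} [Field K] [LinearOrder K]
    [IsStrictOrderedRing K] [Fintype ι] {x : ι → K} {ε b : ι → ℤ}
    (hsgn : ∀ i, 0 < (-1 : K) ^ ε i * x i) (hprod : ∏ i, x i ^ b i = 1) :
    Even (∑ i, ε i * b i) := by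
  have hsplit : ∀ i, x i ^ b i = (-1 : K) ^ (ε i * b i) * ((-1 : K) ^ ε i * x i) ^ b i := by
    intro i
    rw [mul_zpow, ← zpow_mul, ← mul_assoc, ← zpow_add₀ (by norm_num), ← two_mul, zpow_mul]
    norm_num
  have hpos : 0 < ∏ i, ((-1 : K) ^ ε i * x i) ^ b i :=
    prod_pos fun i _ => zpow_pos (hsgn i) _
  have hsign : 0 < (-1 : K) ^ (∑ i, ε i * b i) := by
    rw [Finset.prod_congr rfl fun i _ => hsplit i, prod_mul_distrib,
      ← zpow_sum₀ (by norm_num)] at hprod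
    exact pos_of_mul_pos_left (by rw [hprod]; exact one_pos) hpos.le
  rcases Int.even_or_odd (∑ i, ε i * b i) with heven | hodd
  · exact heven
  · rw [hodd.neg_one_zpow] at hsign
    exact absurd hsign (by norm_num)

theorem gale_solution_parity_condition_general
    (d k : ℕ) (A : Matrix (Fin (d + 1)) (Fin (d + k + 1)) ℤ)
    (B : Matrix (Fin (d + k + 1)) (Fin k) ℤ)
    (hBgen : ∀ b : Fin (d + k + 1) → ℤ, A.mulVec b = 0 →
      ∃ c : Fin k → ℤ, ∀ i, b i = ∑ j, c j * B i j)
    (D : Matrix (Fin (d + k + 1)) (Fin (k + 1)) ℝ)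
    (ε : Fin (d + k + 1) → ℤ) (y : Fin (k + 1) → ℝ)
    (hsgn : ∀ i, 0 < (-1 : ℝ) ^ ε i * D.mulVec y i)
    (hprod : ∀ j, ∏ i, (D.mulVec y i) ^ B i j = 1) :
    ∀ b : Fin (d + k + 1) → ℤ, A.mulVec b = 0 →
      (2 : ℤ) ∣ ∑ i, ε i * b i := by
  intro b hb
  obtain ⟨c, rfl⟩ : ∃ c : Fin k → ℤ, b = fun i => ∑ j, c j * B i j := by
    obtain ⟨c, hc⟩ := hBgen b hb
    exact ⟨c, funext hc⟩
  have hne : ∀ i, D.mulVec y i ≠ 0 := fun i h => by simpa [h] using hsgn i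
  exact (even_sum_mul_of_prod_zpow_eq_one hsgn (prod_zpow_sum_mul_eq_one hne hprod c)).two_dvd

/-- if the columns of `B ∈ ℤ^{n×k}` form a ℤ-basis of `ker A ∩ ℤ^n`,
`y` lies in the chamber `𝒞^ν_ε` (so `(−1)^{ε_i}⟨P_i,y⟩ > 0` for all `i`) and `y`
solves the Gale system, then `Σ_i ε_i b_i` is even for every `b ∈ ker A ∩ ℤ^n`,
i.e. `[ε]₂` lies in the left kernel of `[B]₂`. -/
theorem gale_solution_parity_condition
    (d k : ℕ) (A : Matrix (Fin (d + 1)) (Fin (d + k + 1)) ℤ)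
    (B : Matrix (Fin (d + k + 1)) (Fin k) ℤ)
    (hBker : ∀ j, A.mulVec (fun i => B i j) = 0)
    (hBindep : LinearIndependent ℤ (fun j => (fun i => B i j)))
    (hBgen : ∀ b : Fin (d + k + 1) → ℤ, A.mulVec b = 0 →
      ∃ c : Fin k → ℤ, ∀ i, b i = ∑ j, c j * B i j)
    (C : Matrix (Fin d) (Fin (d + k + 1)) ℝ) (hCrank : C.rank = d)
    (D : Matrix (Fin (d + k + 1)) (Fin (k + 1)) ℝ)
    (hCD : C * D = 0) (hDrank : D.rank = k + 1)
    (ε : Fin (d + k + 1) → ℤ) (y : Fin (k + 1) → ℝ)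
    (hsgn : ∀ i, 0 < (-1 : ℝ) ^ ε i * D.mulVec y i)
    (hprod : ∀ j, ∏ i, (D.mulVec y i) ^ B i j = 1) :
    ∀ b : Fin (d + k + 1) → ℤ, A.mulVec b = 0 →
      (2 : ℤ) ∣ ∑ i, ε i * b i :=
  gale_solution_parity_condition_general d k A B hBgen D ε y hsgn hprod
end

section
/- Let A ∈ ℤ^{(d+1)×n} with first row all ones and A' ∈ ℤ^{d×n} the matrix of the remaining rows, and define ψ : ℤ^d → ℤ^{1×n} by ψ(s) = s·A'. Then for s, s' ∈ ℤ^d, the open cones 𝒞^ν_{ψ(s)} and 𝒞^ν_{ψ(s')} coincide if and only if [s'−s]_2 belongs to the left kernel of [A']_2 over ℤ/2ℤ; consequently, for each s there are exactly 2^{d − rk([A']_2)} residues s' ∈ (ℤ/2ℤ)^d with 𝒞^ν_{ψ(s)} = 𝒞^ν_{ψ(s')}, and the image of the map s ↦ 𝒞^ν_{ψ(s)} consists of exactly 2^{rk([A']_2)} distinct cones. -/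
lemma aux_neg_one_zpow_congr (a b : ℤ) (h : ((a : ZMod 2) = (b : ZMod 2))) :
    (-1 : ℝ) ^ a = (-1 : ℝ) ^ b := by
  have hd : ((2:ℕ) : ℤ) ∣ a - b := by
    rw [← ZMod.intCast_zmod_eq_zero_iff_dvd]
    push_cast
    rw [sub_eq_zero]; exact_mod_cast h
  have he : Even (a - b) := ⟨(a-b)/2, by omega⟩
  rw [Int.even_sub] at he
  rcases Int.even_or_odd a with ha | ha
  · rw [ha.neg_one_zpow, (he.mp ha).neg_one_zpow]
  · have hb : Odd b := Int.not_even_iff_odd.mp (fun hb => (Int.not_even_iff_odd.mpr ha) (he.mpr hb))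
    rw [ha.neg_one_zpow, hb.neg_one_zpow]

lemma aux_card_range {α β γ : Type*} (g : α → β) (h : α → γ)
    (H : ∀ a b, g a = g b ↔ h a = h b) :
    Nat.card (Set.range g) = Nat.card (Set.range h) := by
  refine Nat.card_congr ⟨fun x => ⟨h (Classical.choose x.2), ⟨_, rfl⟩⟩,
    fun y => ⟨g (Classical.choose y.2), ⟨_, rfl⟩⟩, fun x => ?_, fun y => ?_⟩
  · exact Subtype.ext (((H _ _).mpr (Classical.choose_spec
      (⟨_, rfl⟩ : ∃ a, h a = h (Classical.choose x.2)))).trans (Classical.choose_spec x.2))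
  · exact Subtype.ext (((H _ _).mp (Classical.choose_spec
      (⟨_, rfl⟩ : ∃ a, g a = g (Classical.choose y.2)))).trans (Classical.choose_spec y.2))

/-- with `ψ(s) = s·A'` and the chambers
`𝒞^ν_ε = {y : (−1)^{ε_i}⟨P_i,y⟩ > 0 ∀i}` (for a Gale dual `D` of a uniform `C`,
all chambers `𝒞^ν_{ψ(s)}` being nonempty), two chambers `𝒞^ν_{ψ(s)}` and
`𝒞^ν_{ψ(s')}` coincide iff `[s'−s]₂` is in the left kernel of `[A']₂`; for each
`s` there are exactly `2^{d−rk[A']₂}` residues `σ ∈ (ℤ/2)^d` of vectors `s'` with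
equal chamber, and the image of `s ↦ 𝒞^ν_{ψ(s)}` consists of exactly
`2^{rk[A']₂}` chambers. -/
theorem chambers_of_orthants
    (d k : ℕ) (A' : Matrix (Fin d) (Fin (d + k + 1)) ℤ)
    (C : Matrix (Fin d) (Fin (d + k + 1)) ℝ)
    (hCunif : ∀ c : Fin d → Fin (d + k + 1), Function.Injective c →
      (C.submatrix id c).det ≠ 0)
    (D : Matrix (Fin (d + k + 1)) (Fin (k + 1)) ℝ)
    (hCD : C * D = 0) (hDrank : D.rank = k + 1)
    (ψ : (Fin d → ℤ) → (Fin (d + k + 1) → ℤ))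
    (hψ : ∀ s i, ψ s i = ∑ t, s t * A' t i)
    (Cone : (Fin (d + k + 1) → ℤ) → Set (Fin (k + 1) → ℝ))
    (hCone : ∀ ε, Cone ε = {y | ∀ i, 0 < (-1 : ℝ) ^ ε i * D.mulVec y i})
    (hne : ∀ s, (Cone (ψ s)).Nonempty)
    (A2 : Matrix (Fin d) (Fin (d + k + 1)) (ZMod 2))
    (hA2 : A2 = A'.map (Int.cast : ℤ → ZMod 2)) :
    (∀ s s' : Fin d → ℤ, Cone (ψ s) = Cone (ψ s') ↔
      Matrix.vecMul (fun t => ((s' t - s t : ℤ) : ZMod 2)) A2 = 0) ∧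
    (∀ s : Fin d → ℤ,
      Set.ncard {σ : Fin d → ZMod 2 | ∃ s' : Fin d → ℤ,
        (∀ t, ((s' t : ℤ) : ZMod 2) = σ t) ∧ Cone (ψ s') = Cone (ψ s)} =
      2 ^ (d - A2.rank)) ∧
    Set.ncard (Set.range fun s : Fin d → ℤ => Cone (ψ s)) = 2 ^ A2.rank := by
  classical
  -- key parity characterization
  have key : ∀ s s' : Fin d → ℤ, Cone (ψ s) = Cone (ψ s') ↔
      ∀ i, ((ψ s i : ZMod 2)) = ((ψ s' i : ZMod 2)) := by
    intro s s'
    constructor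
    · intro h i
      by_contra hni
      obtain ⟨y, hy⟩ := hne s
      have hy' : y ∈ Cone (ψ s') := h ▸ hy
      rw [hCone] at hy hy'
      have h1 := hy i
      have h2 := hy' i
      have hstep : (ψ s i : ZMod 2) = ((ψ s' i + 1 : ℤ) : ZMod 2) := by
        push_cast
        exact (by decide : ∀ x y : ZMod 2, x ≠ y → x = y + 1) _ _ hni
      have he := aux_neg_one_zpow_congr _ _ hstep
      rw [zpow_add_one₀ (by norm_num : (-1:ℝ) ≠ 0)] at he
      rw [he] at h1
      nlinarith [h1, h2]
    · intro h
      rw [hCone, hCone]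
      exact Set.ext fun y => forall_congr' fun i => by
        rw [aux_neg_one_zpow_congr _ _ (h i)]
  have cast_eq : ∀ s s' : Fin d → ℤ,
      (Matrix.vecMul (fun t => ((s' t - s t : ℤ) : ZMod 2)) A2 = 0) ↔
      ∀ i, ((ψ s i : ZMod 2)) = ((ψ s' i : ZMod 2)) := by
    intro s s'
    rw [funext_iff]
    refine forall_congr' fun i => ?_
    have hv : Matrix.vecMul (fun t => ((s' t - s t : ℤ) : ZMod 2)) A2 i
        = ((ψ s' i : ℤ) : ZMod 2) - ((ψ s i : ℤ) : ZMod 2) := by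
      simp only [Matrix.vecMul, dotProduct, hA2, Matrix.map_apply, hψ]
      push_cast
      rw [← Finset.sum_sub_distrib]
      congr 1; funext t; ring
    rw [hv, Pi.zero_apply, sub_eq_zero, eq_comm]
  haveI : Fact (Nat.Prime 2) := ⟨Nat.prime_two⟩
  set L := Matrix.vecMulLinear A2 with hLdef
  have hrange : Module.finrank (ZMod 2) (LinearMap.range L) = A2.rank := by
    rw [← Matrix.rank_transpose A2, Matrix.rank, Matrix.mulVecLin_transpose]
  have hdim : Module.finrank (ZMod 2) (Fin d → ZMod 2) = d := by simp
  have hsum := LinearMap.finrank_range_add_finrank_ker L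
  rw [hrange, hdim] at hsum
  have hker : Module.finrank (ZMod 2) (LinearMap.ker L) = d - A2.rank := by omega
  have cardker : Nat.card (LinearMap.ker L) = 2 ^ (d - A2.rank) := by
    letI : Fintype (LinearMap.ker L) := Fintype.ofFinite _
    rw [Nat.card_eq_fintype_card, Module.card_eq_pow_finrank (K := ZMod 2), ZMod.card, hker]
  have cardrange : Nat.card (LinearMap.range L) = 2 ^ A2.rank := by
    letI : Fintype (LinearMap.range L) := Fintype.ofFinite _
    rw [Nat.card_eq_fintype_card, Module.card_eq_pow_finrank (K := ZMod 2), ZMod.card, hrange]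
  refine ⟨fun s s' => (key s s').trans (cast_eq s s').symm, ?_, ?_⟩
  · intro s
    set c : Fin d → ZMod 2 := fun t => ((s t : ℤ) : ZMod 2) with hc
    have hset : {σ : Fin d → ZMod 2 | ∃ s' : Fin d → ℤ,
        (∀ t, ((s' t : ℤ) : ZMod 2) = σ t) ∧ Cone (ψ s') = Cone (ψ s)} =
        (fun τ => τ + c) '' (LinearMap.ker L : Set (Fin d → ZMod 2)) := by
      ext σ
      simp only [Set.mem_setOf_eq, Set.mem_image, SetLike.mem_coe, LinearMap.mem_ker]
      constructor
      · rintro ⟨s', hs', hcone⟩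
        refine ⟨σ - c, ?_, by abel⟩
        have h0 := (cast_eq s s').mpr ((key s s').mp hcone.symm)
        have heq : (fun t => ((s' t - s t : ℤ) : ZMod 2)) = σ - c := by
          funext t
          push_cast
          rw [hs' t]
          rfl
        show Matrix.vecMul (σ - c) A2 = 0
        rwa [heq] at h0
      · rintro ⟨τ, hτ, rfl⟩
        refine ⟨fun t => (((τ + c) t).val : ℤ), fun t => ?_, ?_⟩
        · push_cast [ZMod.natCast_val, ZMod.cast_id]
          rfl
        · refine ((key s _).mpr ((cast_eq s _).mp ?_)).symm
          have heq : (fun t => (((((τ + c) t).val : ℤ) - s t : ℤ) : ZMod 2)) = τ := by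
            funext t
            push_cast [ZMod.natCast_val, ZMod.cast_id]
            show τ t + c t - c t = τ t
            abel
          show Matrix.vecMul _ A2 = 0
          rw [heq]
          exact hτ
    rw [hset, Set.ncard_image_of_injective _ (fun a b hab => by simpa using congrArg (· - c) hab),
      ← Nat.card_coe_set_eq]
    exact cardker
  · set h : (Fin d → ℤ) → (Fin (d + k + 1) → ZMod 2) :=
      fun s => Matrix.vecMul (fun t => ((s t : ℤ) : ZMod 2)) A2 with hh
    have Hgh : ∀ a b : Fin d → ℤ, Cone (ψ a) = Cone (ψ b) ↔ h a = h b := by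
      intro a b
      rw [key, ← cast_eq a b]
      have heq : (fun t => ((b t - a t : ℤ) : ZMod 2)) =
          (fun t => ((b t : ℤ) : ZMod 2)) - (fun t => ((a t : ℤ) : ZMod 2)) := by
        funext t; push_cast; rfl
      rw [heq, Matrix.sub_vecMul, sub_eq_zero, hh, eq_comm]
    rw [← Nat.card_coe_set_eq, aux_card_range _ h Hgh]
    have hsurj : Function.Surjective
        (fun s : Fin d → ℤ => fun t => ((s t : ℤ) : ZMod 2)) := by
      intro σ
      exact ⟨fun t => ((σ t).val : ℤ), funext fun t => by
        push_cast [ZMod.natCast_val, ZMod.cast_id]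
        rfl⟩
    have hrangeh : Set.range h = Set.range (L : (Fin d → ZMod 2) → _) := by
      have hcomp : h = (L : (Fin d → ZMod 2) → _) ∘
          (fun s : Fin d → ℤ => fun t => ((s t : ℤ) : ZMod 2)) := rfl
      rw [hcomp, Set.range_comp, hsurj.range_eq, Set.image_univ]
    rw [hrangeh, ← LinearMap.coe_range]
    exact cardrange
end
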